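/- arXiv:1207.6177 — 10 statements merged into one kernel-verified Lean document; each statement's English description precedes it below -/
import Mathlib

section
/- Let f_0(x,y,z) = z^3 - x*y*z^2 + (x^2+y^2-2)*z - x*y. For q = 2^n, the number of triples (a,b,c) in F_q^3 with f_0(a,b,c) = 0 equals q^2 + 1. -/
/-!
In characteristic 2 the equation `f₀(a, b, c) = 0` reads `(a c + b)(b c + a) = c³`. Count the
solutions fibre by fibre over `c`. For `c ≠ 1` the linear map `(a, b) ↦ (a c + b, b c + a)` has
determinant `c² - 1 = (c - 1)² ≠ 0`, so the fibre is in bijection with the solutions of `u v = c³`: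
there are `2q - 1` of them for `c = 0` and `q - 1` otherwise. For `c = 1` the equation is
`(a + b)² = 1`, i.e. `b = a + 1`, with `q` solutions. Altogether
`(2q - 1) + q + (q - 2)(q - 1) = q² + 1`.
-/

open Finset

section Field

variable {K : Type*} [Field K]

def prodTwistEquiv (c : K) (hc : c ^ 2 ≠ 1) : K × K ≃ K × K where
  toFun p := (p.1 * c + p.2, p.2 * c + p.1)
  invFun p := ((p.1 * c - p.2) / (c ^ 2 - 1), (p.2 * c - p.1) / (c ^ 2 - 1))
  left_inv p := by
    have : c ^ 2 - 1 ≠ 0 := sub_ne_zero.mpr hc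
    ext <;> field_simp <;> ring
  right_inv p := by
    have : c ^ 2 - 1 ≠ 0 := sub_ne_zero.mpr hc
    ext <;> field_simp <;> ring

theorem card_twist_mul_eq {c : K} (hc : c ^ 2 ≠ 1) (t : K) :
    Nat.card {p : K × K // (p.1 * c + p.2) * (p.2 * c + p.1) = t} =
      Nat.card {p : K × K // p.1 * p.2 = t} :=
  Nat.card_congr <| (prodTwistEquiv c hc).subtypeEquiv fun _ => Iff.rfl

theorem card_mul_eq_of_ne_zero [Fintype K] {t : K} (ht : t ≠ 0) :
    Nat.card {p : K × K // p.1 * p.2 = t} = Fintype.card K - 1 := by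
  classical
  rw [← Fintype.card_units, ← Nat.card_eq_fintype_card]
  exact Nat.card_congr
    { toFun := fun p => Units.mk0 p.1.1 (left_ne_zero_of_mul (p.2.symm ▸ ht))
      invFun := fun u => ⟨(u, u⁻¹ * t), by simp⟩
      left_inv := fun ⟨⟨a, b⟩, hab⟩ => by
        have ha : a ≠ 0 := left_ne_zero_of_mul (hab.symm ▸ ht)
        ext
        · rfl
        · simp [← hab, ha]
      right_inv := fun _ => Units.ext rfl }

end Field

theorem card_mul_eq_zero_add_one {M : Type*} [MonoidWithZero M] [NoZeroDivisors M] [Fintype M]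
    [DecidableEq M] :
    Nat.card {p : M × M // p.1 * p.2 = 0} + 1 = 2 * Fintype.card M := by
  have hunion : univ.filter (fun p : M × M => p.1 * p.2 = 0) = {0} ×ˢ univ ∪ univ ×ˢ {0} := by
    ext ⟨a, b⟩
    simp [mul_eq_zero, eq_comm]
  have hinter : ({0} ×ˢ univ ∩ univ ×ˢ {0} : Finset (M × M)) = {(0, 0)} := by
    ext ⟨a, b⟩
    simp [eq_comm]
  rw [Nat.card_eq_fintype_card, Fintype.card_subtype, hunion, ← card_singleton ((0 : M), (0 : M)),
    ← hinter, card_union_add_card_inter]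
  simp [two_mul]

section CharTwo

variable {R : Type*} [CommRing R] [CharP R 2]

theorem f0_eq_zero_iff_of_charTwo (a b c : R) :
    c ^ 3 - a * b * c ^ 2 + (a ^ 2 + b ^ 2 - 2) * c - a * b = 0 ↔
      (a * c + b) * (b * c + a) = c ^ 3 := by
  have h2 : (2 : R) = 0 := CharTwo.two_eq_zero
  constructor <;> intro h <;> linear_combination -h + c * (a ^ 2 + b ^ 2 - 1) * h2

theorem card_f0_zeros_eq_sum_card_fiber [Fintype R] :
    Nat.card {v : R × R × R //
      v.2.2 ^ 3 - v.1 * v.2.1 * v.2.2 ^ 2 + (v.1 ^ 2 + v.2.1 ^ 2 - 2) * v.2.2 - v.1 * v.2.1 = 0} =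
      ∑ c : R, Nat.card {p : R × R // (p.1 * c + p.2) * (p.2 * c + p.1) = c ^ 3} := by
  rw [← Nat.card_sigma]
  exact Nat.card_congr <|
    (((Equiv.prodAssoc R R R).symm.trans (Equiv.prodComm _ _)).subtypeEquiv
      fun v => f0_eq_zero_iff_of_charTwo v.1 v.2.1 v.2.2).trans
    (Equiv.subtypeProdEquivSigmaSubtype fun (c : R) (p : R × R) => (p.1 * c + p.2) * (p.2 * c + p.1) = c ^ 3)

theorem card_add_mul_add_eq_one [NoZeroDivisors R] :
    Nat.card {p : R × R // (p.1 + p.2) * (p.2 + p.1) = 1} = Nat.card R := by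
  have h2 : (2 : R) = 0 := CharTwo.two_eq_zero
  refine Nat.card_congr
    { toFun := fun p => p.1.1
      invFun := fun a => ⟨(a, a + 1), by linear_combination (2 * a ^ 2 + 2 * a) * h2⟩
      left_inv := fun ⟨⟨a, b⟩, hab⟩ => ?_
      right_inv := fun _ => rfl }
  have hsq : (b + a) ^ 2 = 1 ^ 2 := by linear_combination hab
  have hb : b = 1 + a := CharTwo.add_eq_iff_eq_add.mp (CharTwo.sq_inj.mp hsq)
  ext
  · rfl
  · exact (hb.trans (add_comm 1 a)).symm

end CharTwo

section FiniteField

variable {K : Type*} [Field K] [Fintype K] [CharP K 2]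

theorem card_fiber_of_charTwo [DecidableEq K] (c : K) :
    Nat.card {p : K × K // (p.1 * c + p.2) * (p.2 * c + p.1) = c ^ 3} =
      (Fintype.card K - 1) + (if c = 0 then Fintype.card K else 0) + (if c = 1 then 1 else 0) := by
  classical
  have hq := Fintype.card_pos (α := K)
  by_cases h1 : c = 1
  · subst h1
    rw [if_pos rfl, if_neg one_ne_zero]
    simp only [mul_one, one_pow]
    rw [card_add_mul_add_eq_one, Nat.card_eq_fintype_card]
    omega
  have hc : c ^ 2 ≠ 1 := by rwa [← one_pow 2, Ne, CharTwo.sq_inj]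
  rw [card_twist_mul_eq hc, if_neg h1]
  by_cases h0 : c = 0
  · subst h0
    rw [if_pos rfl, zero_pow three_ne_zero]
    have := card_mul_eq_zero_add_one (M := K)
    omega
  · rw [card_mul_eq_of_ne_zero (pow_ne_zero 3 h0), if_neg h0, add_zero, add_zero]

theorem card_f0_zeros_of_charTwo :
    Nat.card {v : K × K × K //
      v.2.2 ^ 3 - v.1 * v.2.1 * v.2.2 ^ 2 + (v.1 ^ 2 + v.2.1 ^ 2 - 2) * v.2.2 - v.1 * v.2.1 = 0} =
      Fintype.card K ^ 2 + 1 := by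
  classical
  simp only [card_f0_zeros_eq_sum_card_fiber, card_fiber_of_charTwo, sum_add_distrib, sum_const,
    sum_ite_eq', mem_univ, if_true, card_univ, smul_eq_mul]
  obtain ⟨k, hk⟩ := Nat.exists_eq_add_one.mpr (Fintype.card_pos (α := K))
  rw [hk, Nat.add_sub_cancel]
  ring

end FiniteField

theorem stmt_3_general (n : ℕ)
    (F : Type) [Field F] [Fintype F] (hF : Fintype.card F = 2 ^ n) :
    Nat.card {v : F × F × F //
      v.2.2 ^ 3 - v.1 * v.2.1 * v.2.2 ^ 2 + (v.1 ^ 2 + v.2.1 ^ 2 - 2) * v.2.2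
        - v.1 * v.2.1 = 0} = (2 ^ n) ^ 2 + 1 := by
  have h2n : (2 : F) ^ n = 0 := by exact_mod_cast hF ▸ FiniteField.cast_card_eq_zero F
  have : CharP F 2 :=
    CharTwo.of_one_ne_zero_of_two_eq_zero one_ne_zero (eq_zero_of_pow_eq_zero h2n)
  rw [card_f0_zeros_of_charTwo, hF]

theorem stmt_3 (n : ℕ) (hn : 0 < n)
    (F : Type) [Field F] [Fintype F] (hF : Fintype.card F = 2 ^ n) :
    Nat.card {v : F × F × F //
      v.2.2 ^ 3 - v.1 * v.2.1 * v.2.2 ^ 2 + (v.1 ^ 2 + v.2.1 ^ 2 - 2) * v.2.2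
        - v.1 * v.2.1 = 0} = (2 ^ n) ^ 2 + 1 :=
  stmt_3_general n F hF
end

section
/- Let p be an odd prime with (2/p) = 1 (i.e., 2 is a quadratic residue mod p), and let q = p^n. Then the number of triples (a,b,c) in F_q^3 with c^3 - a*b*c^2 + (a^2+b^2-2)*c - a*b = 0 equals q^2 + 4q + 2. -/
/-!
The equation is `(c a - b) (a - c b) = c (2 - c²)`. For `c ≠ ±1` the substitution
`(x, y) = (c a - b, a - c b)` is invertible, so the fibre over `c` is the hyperbola `x y = d` with
`d = c (2 - c²)`: it has `q - 1` points, or `2 q - 1` when `d = 0`, i.e. when `c ∈ {0, ±√2}`.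
For `c = ±1` the equation collapses to `(a - c b)² = 1`, which has `2 q` solutions.
Summing, `(q - 5) (q - 1) + 3 (2 q - 1) + 2 · 2 q = q² + 4 q + 2`.
-/

open Finset

section Whitehead

variable {F : Type*} [Field F]

lemma whitehead_eq_zero_iff (a b c : F) :
    c ^ 3 - a * b * c ^ 2 + (a ^ 2 + b ^ 2 - 2) * c - a * b = 0 ↔
      (c * a - b) * (a - c * b) = c * (2 - c ^ 2) := by
  constructor <;> intro h <;> linear_combination h

def whiteheadFiber (c : F) : Set (F × F) :=
  {x | (c * x.1 - x.2) * (x.1 - c * x.2) = c * (2 - c ^ 2)}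

lemma card_whitehead_eq_sum_card_whiteheadFiber [Fintype F] :
    Nat.card {v : F × F × F //
      v.2.2 ^ 3 - v.1 * v.2.1 * v.2.2 ^ 2 + (v.1 ^ 2 + v.2.1 ^ 2 - 2) * v.2.2
        - v.1 * v.2.1 = 0} = ∑ c : F, Nat.card (whiteheadFiber c) := by
  rw [← Nat.card_sigma]
  exact Nat.card_congr
    { toFun := fun v => ⟨v.1.2.2, (v.1.1, v.1.2.1), (whitehead_eq_zero_iff _ _ _).mp v.2⟩
      invFun := fun s => ⟨(s.2.1.1, s.2.1.2, s.1), (whitehead_eq_zero_iff _ _ _).mpr s.2.2⟩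
      left_inv := fun _ => rfl
      right_inv := fun _ => rfl }

lemma card_sub_mul_sub_eq {c : F} (hc : c ^ 2 ≠ 1) (d : F) :
    Nat.card {x : F × F // (c * x.1 - x.2) * (x.1 - c * x.2) = d} =
      Nat.card {x : F × F // x.1 * x.2 = d} := by
  have hc' : c ^ 2 - 1 ≠ 0 := sub_ne_zero.mpr hc
  exact Nat.card_congr <| Equiv.subtypeEquiv
    { toFun := fun x => (c * x.1 - x.2, x.1 - c * x.2)
      invFun := fun y => ((c * y.1 - y.2) / (c ^ 2 - 1), (y.1 - c * y.2) / (c ^ 2 - 1))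
      left_inv := fun x => by ext <;> field_simp <;> ring
      right_inv := fun y => by ext <;> field_simp <;> ring }
    (fun _ => Iff.rfl)

variable [Fintype F]

lemma card_mul_eq_of_ne_zero_s4 {d : F} (hd : d ≠ 0) :
    Nat.card {x : F × F // x.1 * x.2 = d} = Fintype.card F - 1 := by
  classical
  rw [← Fintype.card_units, ← Nat.card_eq_fintype_card]
  refine (Nat.card_congr
    { toFun := fun u => ⟨(u, u⁻¹ * d), by simp⟩
      invFun := fun x => Units.mk0 x.1.1 (left_ne_zero_of_mul (x.2.symm ▸ hd))
      left_inv := fun u => Units.ext rfl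
      right_inv := fun x => ?_ }).symm
  obtain ⟨⟨a, b⟩, rfl⟩ := x
  have ha : a ≠ 0 := left_ne_zero_of_mul hd
  simp [ha]

lemma card_mul_eq_zero :
    Nat.card {x : F × F // x.1 * x.2 = 0} = 2 * Fintype.card F - 1 := by
  classical
  have hfilter : ({x : F × F | x.1 * x.2 = 0} : Finset (F × F)) =
      ({0} ×ˢ univ) ∪ (univ ×ˢ {0}) := by
    ext ⟨a, b⟩; simp [eq_comm]
  have hinter : ({0} ×ˢ univ) ∩ (univ ×ˢ {0}) = {((0 : F), (0 : F))} := by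
    ext ⟨a, b⟩; simp [and_comm, eq_comm]
  have := card_union_add_card_inter ({(0 : F)} ×ˢ (univ : Finset F)) (univ ×ˢ {0})
  rw [hinter, ← hfilter] at this
  simp only [card_product, card_singleton, card_univ] at this
  rw [Nat.card_eq_fintype_card, Fintype.card_subtype]
  omega

lemma card_filter_sq_eq_one [DecidableEq F] (h2 : (2 : F) ≠ 0) :
    #{c : F | c ^ 2 = 1} = 2 := by
  have hfilter : ({c : F | c ^ 2 = 1} : Finset F) = {1, -1} := by
    ext c; simp
  rw [hfilter, card_pair]
  intro h
  exact h2 (by linear_combination h)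

lemma card_filter_mul_two_sub_sq_eq_zero [DecidableEq F] (h2 : (2 : F) ≠ 0) {t : F}
    (ht : t ^ 2 = 2) : #{c : F | c * (2 - c ^ 2) = 0} = 3 := by
  have ht0 : t ≠ 0 := by rintro rfl; exact h2 (by simpa using ht.symm)
  have hfilter : ({c : F | c * (2 - c ^ 2) = 0} : Finset F) = {0, t, -t} := by
    ext c
    simp only [mem_filter, mem_univ, true_and, mem_insert, mem_singleton, mul_eq_zero,
      ← ht, sub_eq_zero, sq_eq_sq_iff_eq_or_eq_neg, eq_comm (a := t ^ 2)]
  rw [hfilter, card_insert_of_notMem, card_pair]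
  · intro h
    have h2t : 2 * t = 0 := by linear_combination h
    exact ht0 ((mul_eq_zero.mp h2t).resolve_left h2)
  · simp [ht0.symm, ht0]

lemma card_whiteheadFiber_of_sq_eq_one (h2 : (2 : F) ≠ 0) {c : F} (hc : c ^ 2 = 1) :
    Nat.card (whiteheadFiber c) = 2 * Fintype.card F := by
  classical
  have hc0 : c ≠ 0 := by rintro rfl; simp at hc
  have hfiber : ∀ x : F × F, x ∈ whiteheadFiber c ↔ (x.1 - c * x.2) ^ 2 = 1 := fun x => by
    have : (c * x.1 - x.2) * (x.1 - c * x.2) - c * (2 - c ^ 2) =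
        c * ((x.1 - c * x.2) ^ 2 - 1) := by
      linear_combination (x.2 * (x.1 - c * x.2) + c) * hc
    rw [whiteheadFiber, Set.mem_ofPred_eq, ← sub_eq_zero, this, mul_eq_zero, sub_eq_zero]
    simp [hc0]
  let shear : F × F ≃ F × F :=
    { toFun := fun x => (x.1 - c * x.2, x.2)
      invFun := fun y => (y.1 + c * y.2, y.2)
      left_inv := fun x => by simp
      right_inv := fun y => by simp }
  calc Nat.card (whiteheadFiber c)
      = Nat.card {y : F × F // y.1 ^ 2 = 1} := Nat.card_congr (shear.subtypeEquiv hfiber)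
    _ = Nat.card {u : F // u ^ 2 = 1} * Fintype.card F := by
        rw [Nat.card_congr (Equiv.prodSubtypeFstEquivSubtypeProd (p := fun u : F => u ^ 2 = 1)), Nat.card_prod,
          Nat.card_eq_fintype_card (α := F)]
    _ = 2 * Fintype.card F := by
        rw [Nat.card_eq_fintype_card, Fintype.card_subtype, card_filter_sq_eq_one h2]

lemma card_whiteheadFiber [DecidableEq F] (h2 : (2 : F) ≠ 0) (c : F) :
    Nat.card (whiteheadFiber c) = (Fintype.card F - 1) +
      (if c ^ 2 = 1 then Fintype.card F + 1 else 0) +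
      (if c * (2 - c ^ 2) = 0 then Fintype.card F else 0) := by
  have hq : 0 < Fintype.card F := Fintype.card_pos
  by_cases hc : c ^ 2 = 1
  · have hc0 : c ≠ 0 := by rintro rfl; simp at hc
    have hd : c * (2 - c ^ 2) ≠ 0 := by rw [hc]; norm_num [hc0]
    rw [card_whiteheadFiber_of_sq_eq_one h2 hc, if_pos hc, if_neg hd]
    omega
  · rw [if_neg hc, whiteheadFiber, Set.coe_ofPred, card_sub_mul_sub_eq hc]
    split_ifs with hd
    · rw [hd, card_mul_eq_zero]; omega
    · rw [card_mul_eq_of_ne_zero_s4 hd]; omega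

theorem card_whitehead (h2 : (2 : F) ≠ 0) (h2sq : IsSquare (2 : F)) :
    Nat.card {v : F × F × F //
      v.2.2 ^ 3 - v.1 * v.2.1 * v.2.2 ^ 2 + (v.1 ^ 2 + v.2.1 ^ 2 - 2) * v.2.2
        - v.1 * v.2.1 = 0} = Fintype.card F ^ 2 + 4 * Fintype.card F + 2 := by
  classical
  obtain ⟨t, ht⟩ := h2sq
  simp only [card_whitehead_eq_sum_card_whiteheadFiber, card_whiteheadFiber h2, sum_add_distrib,
    sum_ite, sum_const_zero, add_zero, sum_const, smul_eq_mul, card_univ,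
    card_filter_sq_eq_one h2, card_filter_mul_two_sub_sq_eq_zero h2 (sq t ▸ ht.symm)]
  obtain ⟨k, hk⟩ : ∃ k, Fintype.card F = k + 1 := Nat.exists_eq_add_one.mpr Fintype.card_pos
  rw [hk, Nat.add_sub_cancel]
  ring

end Whitehead

theorem stmt_4_general (p n : ℕ) [Fact p.Prime]
    (hleg : legendreSym p 2 = 1)
    (F : Type) [Field F] [Fintype F] (hF : Fintype.card F = p ^ n) :
    Nat.card {v : F × F × F //
      v.2.2 ^ 3 - v.1 * v.2.1 * v.2.2 ^ 2 + (v.1 ^ 2 + v.2.1 ^ 2 - 2) * v.2.2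
        - v.1 * v.2.1 = 0} = (p ^ n) ^ 2 + 4 * p ^ n + 2 := by
  have := charP_of_card_eq_prime_pow hF
  have h2p : (2 : ZMod p) ≠ 0 := fun h => by
    simp [(legendreSym.eq_zero_iff p 2).mpr (by exact_mod_cast h)] at hleg
  have h2sq : IsSquare (2 : ZMod p) := by
    exact_mod_cast (legendreSym.eq_one_iff p (by exact_mod_cast h2p)).mp hleg
  let φ := ZMod.castHom (dvd_refl p) F
  rw [card_whitehead (map_ofNat φ 2 ▸ (map_ne_zero φ).mpr h2p) (map_ofNat φ 2 ▸ h2sq.map φ), hF]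

theorem stmt_4 (p n : ℕ) [Fact p.Prime] (hodd : p ≠ 2) (hn : 0 < n)
    (hleg : legendreSym p 2 = 1)
    (F : Type) [Field F] [Fintype F] (hF : Fintype.card F = p ^ n) :
    Nat.card {v : F × F × F //
      v.2.2 ^ 3 - v.1 * v.2.1 * v.2.2 ^ 2 + (v.1 ^ 2 + v.2.1 ^ 2 - 2) * v.2.2
        - v.1 * v.2.1 = 0} = (p ^ n) ^ 2 + 4 * p ^ n + 2 :=
  stmt_4_general p n hleg F hF
end

section
/- Let p be an odd prime with (2/p) = -1, and let q = p^n. Then the number of triples (a,b,c) in F_q^3 with c^3 - a*b*c^2 + (a^2+b^2-2)*c - a*b = 0 equals q^2 + 4q + 2 if n is even, and q^2 + 2q + 2 if n is odd. -/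
/-!
Writing `(a, b, c)` for the point, the cubic equals `c ^ 3 - 2c + (ca - b)(a - cb)`, so over a
fixed `c` the curve is the conic `(ca - b)(a - cb) = 2c - c³`. For `c² ≠ 1` the two linear forms are
independent and the fibre is a hyperbola `uv = d`, with `q - 1` points, or `2q - 1` when `d = 0`,
i.e. when `c = 0` or `c² = 2`. For `c = ±1` the fibre is the pair of parallel lines
`(a - cb)² = 1`, with `2q` points. Summing gives `q² + 3q + 2 + χ(2) q` for the quadratic
character `χ` of `F_q`, and `χ(2) = (2/p)ⁿ = (-1)ⁿ`.
-/

open Finset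

def whiteheadPoly {R : Type*} [CommRing R] (a b c : R) : R :=
  c ^ 3 - a * b * c ^ 2 + (a ^ 2 + b ^ 2 - 2) * c - a * b

theorem whiteheadPoly_eq {R : Type*} [CommRing R] (a b c : R) :
    whiteheadPoly a b c = (c * a - b) * (a - c * b) - (2 * c - c ^ 3) := by
  unfold whiteheadPoly
  ring

theorem card_filter_prod_eq_sum {α β : Type*} [Fintype α] [Fintype β] (P : α → β → Prop)
    [∀ a b, Decidable (P a b)] :
    #{x : α × β | P x.1 x.2} = ∑ a, #{b | P a b} := by
  simp only [card_filter, Fintype.sum_prod_type]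

theorem card_filter_triple_eq_sum_last {α β γ : Type*} [Fintype α] [Fintype β] [Fintype γ]
    (P : α × β × γ → Prop) [DecidablePred P] :
    #{x | P x} = ∑ c, #{x : α × β | P (x.1, x.2, c)} := by
  simp only [card_filter, Fintype.sum_prod_type]
  exact (sum_congr rfl fun _ _ => sum_comm).trans sum_comm

section FiniteField

variable {F : Type*} [Field F] [Fintype F]

theorem ringChar_ne_two_of_card_eq_pow {p n : ℕ} (hp : p.Prime) (hp2 : p ≠ 2)
    (hF : Fintype.card F = p ^ n) : ringChar F ≠ 2 := by
  intro h
  have heven := FiniteField.even_card_of_char_two h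
  rw [hF, ← Nat.even_iff] at heven
  exact Nat.not_even_iff_odd.2 (hp.odd_of_ne_two hp2).pow heven

variable [DecidableEq F]

theorem quadraticChar_two_eq_neg_one_pow {p n : ℕ} [Fact p.Prime] (hp2 : p ≠ 2)
    (hleg : legendreSym p 2 = -1) (hF : Fintype.card F = p ^ n) :
    quadraticChar F 2 = (-1) ^ n := by
  rw [quadraticChar_two (ringChar_ne_two_of_card_eq_pow Fact.out hp2 hF), hF,
    Nat.cast_pow, map_pow, ← legendreSym.at_two hp2, hleg]

theorem card_filter_sq_eq (hF : ringChar F ≠ 2) (a : F) :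
    (#{x : F | x ^ 2 = a} : ℤ) = quadraticChar F a + 1 := by
  simpa only [Set.toFinset_ofPred] using quadraticChar_card_sqrts hF a

theorem card_filter_sq_eq_one_s5 (hF : ringChar F ≠ 2) : #{x : F | x ^ 2 = 1} = 2 := by
  have h := card_filter_sq_eq hF 1
  rw [map_one] at h
  exact_mod_cast h

theorem card_filter_mul_eq (d : F) :
    (#{x : F × F | x.1 * x.2 = d} : ℤ) =
      Fintype.card F - 1 + if d = 0 then (Fintype.card F : ℤ) else 0 := by
  have fiber (u : F) :
      #{v | u * v = d} = if u = 0 then (if d = 0 then Fintype.card F else 0) else 1 := by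
    split_ifs with hu hd
    · simp [hu, hd]
    · simp [hu, Ne.symm hd]
    · rw [card_eq_one]
      exact ⟨u⁻¹ * d, by ext v; simp [eq_inv_mul_iff_mul_eq₀ hu]⟩
  rw [card_filter_prod_eq_sum (fun u v => u * v = d), sum_congr rfl fun u _ => fiber u, sum_ite]
  simp only [sum_const, card_univ, smul_eq_mul, mul_one, filter_eq', filter_ne', mem_univ,
    if_true, card_singleton, one_mul, card_erase_of_mem]
  push_cast [Nat.cast_sub Fintype.card_pos]
  split_ifs <;> ring

theorem card_fiber_of_sq_ne_one {c : F} (hc : c ^ 2 ≠ 1) (d : F) :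
    #{x : F × F | (c * x.1 - x.2) * (x.1 - c * x.2) = d} = #{x : F × F | x.1 * x.2 = d} := by
  have hk : c ^ 2 - 1 ≠ 0 := sub_ne_zero.2 hc
  refine card_nbij' (fun x => (c * x.1 - x.2, x.1 - c * x.2))
    (fun y => ((c * y.1 - y.2) / (c ^ 2 - 1), (y.1 - c * y.2) / (c ^ 2 - 1)))
    (fun x hx => by simpa using hx) (fun y hy => ?_) (fun x _ => ?_) (fun y _ => ?_)
  · simp only [coe_filter, mem_univ, true_and, Set.mem_ofPred_eq] at hy ⊢
    rw [← hy]
    field_simp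
    ring
  · ext <;> field_simp <;> ring
  · ext <;> field_simp <;> ring

theorem card_fiber_of_sq_eq_one (hF : ringChar F ≠ 2) {c : F} (hc : c ^ 2 = 1) :
    #{x : F × F | (c * x.1 - x.2) * (x.1 - c * x.2) = 2 * c - c ^ 3} = 2 * Fintype.card F := by
  have hc0 : c ≠ 0 := by rintro rfl; simp at hc
  have parallel_lines (x : F × F) :
      (c * x.1 - x.2) * (x.1 - c * x.2) = 2 * c - c ^ 3 ↔ (x.1 - c * x.2) ^ 2 = 1 := by
    have h : (c * x.1 - x.2) * (x.1 - c * x.2) - (2 * c - c ^ 3)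
        = c * ((x.1 - c * x.2) ^ 2 - 1) := by
      linear_combination (x.1 * x.2 - c * x.2 ^ 2 + c) * hc
    rw [← sub_eq_zero, h, mul_eq_zero, sub_eq_zero, or_iff_right hc0]
  simp_rw [parallel_lines]
  calc _ = #((univ.filter fun y : F => y ^ 2 = 1) ×ˢ (univ : Finset F)) :=
        card_nbij' (fun x => (x.1 - c * x.2, x.2)) (fun y => (y.1 + c * y.2, y.2))
          (fun x hx => by simpa using hx) (fun y hy => by simpa using hy) (fun x _ => by simp)
          (fun y _ => by simp)
    _ = 2 * Fintype.card F := by rw [card_product, card_filter_sq_eq_one_s5 hF, card_univ]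

theorem card_fiber (hF : ringChar F ≠ 2) (c : F) :
    (#{x : F × F | (c * x.1 - x.2) * (x.1 - c * x.2) = 2 * c - c ^ 3} : ℤ) =
      Fintype.card F - 1 + (if c * (2 - c ^ 2) = 0 then (Fintype.card F : ℤ) else 0)
        + if c ^ 2 = 1 then (Fintype.card F : ℤ) + 1 else 0 := by
  by_cases hc : c ^ 2 = 1
  · have hc0 : c * (2 - c ^ 2) ≠ 0 := by
      rw [hc, show (2 : F) - 1 = 1 by norm_num, mul_one]
      rintro rfl
      simp at hc
    rw [card_fiber_of_sq_eq_one hF hc, if_neg hc0, if_pos hc]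
    push_cast
    ring
  · rw [card_fiber_of_sq_ne_one hc, card_filter_mul_eq, if_neg hc, add_zero,
      show 2 * c - c ^ 3 = c * (2 - c ^ 2) by ring]

theorem card_filter_mul_two_sub_sq_eq_zero_s5 (hF : ringChar F ≠ 2) :
    (#{c : F | c * (2 - c ^ 2) = 0} : ℤ) = quadraticChar F 2 + 2 := by
  have h2 : (2 : F) ≠ 0 := Ring.two_ne_zero hF
  have hdisj : Disjoint (univ.filter fun c : F => c = 0) (univ.filter fun c : F => c ^ 2 = 2) :=
    disjoint_filter.2 fun c _ hc hc2 => h2 (by rw [← hc2, hc]; ring)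
  simp_rw [mul_eq_zero, sub_eq_zero, eq_comm (a := (2 : F))]
  rw [filter_or, card_union_of_disjoint hdisj, Nat.cast_add, card_filter_sq_eq hF, filter_eq']
  simp only [mem_univ, if_true, card_singleton, Nat.cast_one]
  ring

theorem card_whiteheadPoly_eq_zero (hF : ringChar F ≠ 2) :
    (#{v : F × F × F | whiteheadPoly v.1 v.2.1 v.2.2 = 0} : ℤ) =
      Fintype.card F ^ 2 + 3 * Fintype.card F + 2 + quadraticChar F 2 * Fintype.card F := by
  rw [card_filter_triple_eq_sum_last (fun v : F × F × F => whiteheadPoly v.1 v.2.1 v.2.2 = 0),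
    Nat.cast_sum]
  simp_rw [whiteheadPoly_eq, sub_eq_zero, card_fiber hF]
  simp only [sum_add_distrib, sum_const, card_univ, sum_ite, nsmul_eq_mul]
  rw [card_filter_mul_two_sub_sq_eq_zero_s5 hF, card_filter_sq_eq_one_s5 hF]
  push_cast
  ring

end FiniteField

theorem stmt_5_general (p n : ℕ) [Fact p.Prime] (hodd : p ≠ 2)
    (hleg : legendreSym p 2 = -1)
    (F : Type) [Field F] [Fintype F] (hF : Fintype.card F = p ^ n) :
    Nat.card {v : F × F × F //
      v.2.2 ^ 3 - v.1 * v.2.1 * v.2.2 ^ 2 + (v.1 ^ 2 + v.2.1 ^ 2 - 2) * v.2.2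
        - v.1 * v.2.1 = 0} =
      if Even n then (p ^ n) ^ 2 + 4 * p ^ n + 2
      else (p ^ n) ^ 2 + 2 * p ^ n + 2 := by
  classical
  have hcount := card_whiteheadPoly_eq_zero (ringChar_ne_two_of_card_eq_pow Fact.out hodd hF)
  rw [quadraticChar_two_eq_neg_one_pow hodd hleg hF, hF] at hcount
  rw [Nat.card_eq_fintype_card, Fintype.card_subtype]
  change #{v : F × F × F | whiteheadPoly v.1 v.2.1 v.2.2 = 0} = _
  apply Nat.cast_injective (R := ℤ)
  rw [hcount]
  split_ifs with hn
  · rw [hn.neg_one_pow]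
    push_cast
    ring
  · rw [(Nat.not_even_iff_odd.1 hn).neg_one_pow]
    push_cast
    ring

theorem stmt_5 (p n : ℕ) [Fact p.Prime] (hodd : p ≠ 2) (hn : 0 < n)
    (hleg : legendreSym p 2 = -1)
    (F : Type) [Field F] [Fintype F] (hF : Fintype.card F = p ^ n) :
    Nat.card {v : F × F × F //
      v.2.2 ^ 3 - v.1 * v.2.1 * v.2.2 ^ 2 + (v.1 ^ 2 + v.2.1 ^ 2 - 2) * v.2.2
        - v.1 * v.2.1 = 0} =
      if Even n then (p ^ n) ^ 2 + 4 * p ^ n + 2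
      else (p ^ n) ^ 2 + 2 * p ^ n + 2 :=
  stmt_5_general p n hodd hleg F hF
end

section
/- Let p be an odd prime and q = p^n. Then the number of triples (a,b,c) in F_q^3 with c^3 - a*b*c^2 + (a^2+b^2-1)*c - a*b = 0 equals q^2 + 2. -/
open Finset

section aux

variable {F : Type} [Field F] [Fintype F] [DecidableEq F]

lemma aux_card_mul (c : F) (hc : c ≠ 0) :
    Fintype.card {uv : F × F // uv.1 * uv.2 = c} = Fintype.card F - 1 := by
  classical
  have e : {uv : F × F // uv.1 * uv.2 = c} ≃ Fˣ :=
    { toFun := fun s => Units.mk0 s.1.1 (by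
        intro h
        apply hc
        have hs := s.2
        rw [h, zero_mul] at hs
        exact hs.symm)
      invFun := fun u => ⟨(u, (u : F)⁻¹ * c), by
        simp [mul_inv_cancel_left₀ u.ne_zero]⟩
      left_inv := fun s => by
        apply Subtype.ext
        obtain ⟨⟨u, v⟩, h⟩ := s
        have hu : u ≠ 0 := by
          intro h0; apply hc; rw [← h, h0, zero_mul]
        simp only [Units.val_mk0, Units.val_inv_eq_inv_val]
        refine Prod.ext rfl ?_
        dsimp only
        field_simp
        linear_combination -h
      right_inv := fun u => by
        ext; rfl }
  rw [Fintype.card_congr e, Fintype.card_units]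

lemma aux_card_generic (z : F) (h : z - z ^ 3 ≠ 0) :
    Fintype.card {ab : F × F //
      (z * ab.1 - ab.2) * (ab.1 - z * ab.2) = z - z ^ 3} = Fintype.card F - 1 := by
  classical
  have hd : z ^ 2 - 1 ≠ 0 := by
    intro h0
    apply h
    have h1 : z ^ 2 = 1 := by linear_combination h0
    linear_combination (-z) * h1
  have e : {ab : F × F // (z * ab.1 - ab.2) * (ab.1 - z * ab.2) = z - z ^ 3} ≃
      {uv : F × F // uv.1 * uv.2 = z - z ^ 3} :=
    { toFun := fun s => ⟨(z * s.1.1 - s.1.2, s.1.1 - z * s.1.2), s.2⟩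
      invFun := fun s => ⟨((z * s.1.1 - s.1.2) / (z ^ 2 - 1),
          (s.1.1 - z * s.1.2) / (z ^ 2 - 1)), by
        obtain ⟨⟨u, v⟩, huv⟩ := s
        dsimp only
        field_simp
        linear_combination (z ^ 2 - 1) ^ 2 * huv⟩
      left_inv := fun s => by
        apply Subtype.ext
        obtain ⟨⟨a, b⟩, hab⟩ := s
        refine Prod.ext ?_ ?_ <;> dsimp only <;> field_simp <;> ring
      right_inv := fun s => by
        apply Subtype.ext
        obtain ⟨⟨u, v⟩, huv⟩ := s
        refine Prod.ext ?_ ?_ <;> dsimp only <;> field_simp <;> ring }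
  rw [Fintype.card_congr e]
  exact aux_card_mul _ h

lemma aux_card_zero :
    Fintype.card {ab : F × F // ab.1 * ab.2 = 0}
      = Fintype.card F * Fintype.card F - (Fintype.card F - 1) * (Fintype.card F - 1) := by
  classical
  have h1 : Fintype.card {ab : F × F // ¬ ab.1 * ab.2 = 0}
      = (Fintype.card F - 1) * (Fintype.card F - 1) := by
    have e : {ab : F × F // ¬ ab.1 * ab.2 = 0} ≃ {a : F // ¬ a = 0} × {b : F // ¬ b = 0} := by
      refine (Equiv.subtypeEquiv (Equiv.refl _) ?_).trans Equiv.subtypeProdEquivProd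
      intro ab
      simp only [Equiv.refl_apply, mul_eq_zero, not_or]
    rw [Fintype.card_congr e, Fintype.card_prod]
    have hc : Fintype.card {a : F // ¬ a = 0} = Fintype.card F - 1 := by
      rw [Fintype.card_subtype_compl, Fintype.card_subtype_eq]
    rw [hc]
  have e2 : {ab : F × F // ab.1 * ab.2 = 0} ≃ {ab : F × F // ¬ ¬ ab.1 * ab.2 = 0} :=
    Equiv.subtypeEquiv (Equiv.refl _) (by intro ab; simp only [Equiv.refl_apply, not_not])
  rw [Fintype.card_congr e2, Fintype.card_subtype_compl, h1, Fintype.card_prod]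

end aux

theorem stmt_6 (p n : ℕ) (hp : p.Prime) (hodd : p ≠ 2) (hn : 0 < n)
    (F : Type) [Field F] [Fintype F] (hF : Fintype.card F = p ^ n) :
    Nat.card {v : F × F × F //
      v.2.2 ^ 3 - v.1 * v.2.1 * v.2.2 ^ 2 + (v.1 ^ 2 + v.2.1 ^ 2 - 1) * v.2.2
        - v.1 * v.2.1 = 0} = (p ^ n) ^ 2 + 2 := by
  classical
  have hcharP : CharP F p := by
    have h1 : CharP F (ringChar F) := ringChar.charP F
    obtain ⟨m, hrp, hcard⟩ := FiniteField.card F (ringChar F)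
    have hdvd : p ∣ ringChar F := by
      have hd : p ∣ p ^ n := dvd_pow_self p hn.ne'
      rw [← hF, hcard] at hd
      exact hp.dvd_of_dvd_pow hd
    have hpe : p = ringChar F := (Nat.prime_dvd_prime_iff_eq hp hrp).mp hdvd
    rwa [hpe]
  have h2F : (2 : F) ≠ 0 := by
    intro h
    have hd : (p : ℕ) ∣ 2 := (CharP.cast_eq_zero_iff F p 2).mp (by exact_mod_cast h)
    have := hp.two_le
    have := Nat.le_of_dvd (by norm_num) hd
    omega
  have h01 : (0 : F) ≠ 1 := zero_ne_one
  have h0m1 : (0 : F) ≠ -1 := by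
    intro h; exact one_ne_zero (α := F) (by linear_combination h)
  have h1m1 : (1 : F) ≠ -1 := by
    intro h; exact h2F (by linear_combination h)
  have hq3 : 3 ≤ Fintype.card F := by
    rw [hF]
    have h2 := hp.two_le
    calc 3 ≤ p := by omega
      _ = p ^ 1 := (pow_one p).symm
      _ ≤ p ^ n := Nat.pow_le_pow_right hp.pos hn
  have key : Nat.card {v : F × F × F //
      v.2.2 ^ 3 - v.1 * v.2.1 * v.2.2 ^ 2 + (v.1 ^ 2 + v.2.1 ^ 2 - 1) * v.2.2
        - v.1 * v.2.1 = 0}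
      = ∑ z : F, Fintype.card {ab : F × F //
          (z * ab.1 - ab.2) * (ab.1 - z * ab.2) = z - z ^ 3} := by
    rw [Nat.card_eq_fintype_card]
    have e : {v : F × F × F //
        v.2.2 ^ 3 - v.1 * v.2.1 * v.2.2 ^ 2 + (v.1 ^ 2 + v.2.1 ^ 2 - 1) * v.2.2
          - v.1 * v.2.1 = 0} ≃
        Σ z : F, {ab : F × F // (z * ab.1 - ab.2) * (ab.1 - z * ab.2) = z - z ^ 3} :=
      { toFun := fun s => ⟨s.1.2.2, ⟨(s.1.1, s.1.2.1), by
          obtain ⟨⟨a, b, z⟩, h⟩ := s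
          dsimp at h ⊢
          linear_combination h⟩⟩
        invFun := fun s => ⟨(s.2.1.1, s.2.1.2, s.1), by
          obtain ⟨z, ⟨⟨a, b⟩, h⟩⟩ := s
          dsimp at h ⊢
          linear_combination h⟩
        left_inv := fun s => rfl
        right_inv := fun s => rfl }
    rw [Fintype.card_congr e, Fintype.card_sigma]
  rw [key]
  have hs : ({0, 1, -1} : Finset F).card = 3 := by
    rw [card_insert_of_notMem (by simp [h01, h0m1]),
        card_insert_of_notMem (by simp [h1m1]), card_singleton]
  rw [← Finset.sum_sdiff (f := fun z : F => Fintype.card {ab : F × F //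
      (z * ab.1 - ab.2) * (ab.1 - z * ab.2) = z - z ^ 3})
    (subset_univ ({0, 1, -1} : Finset F))]
  have hgen : ∑ z ∈ univ \ ({0, 1, -1} : Finset F),
      Fintype.card {ab : F × F // (z * ab.1 - ab.2) * (ab.1 - z * ab.2) = z - z ^ 3}
      = (Fintype.card F - 3) * (Fintype.card F - 1) := by
    have hconst : ∀ z ∈ univ \ ({0, 1, -1} : Finset F),
        Fintype.card {ab : F × F // (z * ab.1 - ab.2) * (ab.1 - z * ab.2) = z - z ^ 3}
          = Fintype.card F - 1 := by
      intro z hz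
      apply aux_card_generic
      simp only [mem_sdiff, mem_insert, mem_singleton, mem_univ, true_and, not_or] at hz
      obtain ⟨hz0, hz1, hzm1⟩ := hz
      intro h
      have hfac : z * (1 - z) * (1 + z) = 0 := by linear_combination h
      rcases mul_eq_zero.mp hfac with h' | h'
      · rcases mul_eq_zero.mp h' with h'' | h''
        · exact hz0 h''
        · exact hz1 (by linear_combination -h'')
      · exact hzm1 (by linear_combination h')
    rw [Finset.sum_congr rfl hconst, Finset.sum_const, card_sdiff_of_subset (subset_univ _), hs,
        card_univ, smul_eq_mul]
  have hzero : Fintype.card {ab : F × F //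
      ((0:F) * ab.1 - ab.2) * (ab.1 - (0:F) * ab.2) = (0:F) - (0:F) ^ 3}
      = Fintype.card F * Fintype.card F - (Fintype.card F - 1) * (Fintype.card F - 1) := by
    have e : {ab : F × F //
        ((0:F) * ab.1 - ab.2) * (ab.1 - (0:F) * ab.2) = (0:F) - (0:F) ^ 3} ≃
        {ab : F × F // ab.1 * ab.2 = 0} :=
      Equiv.subtypeEquiv (Equiv.refl _) (fun ab => by
        simp only [Equiv.refl_apply]
        constructor <;> intro h <;> linear_combination -h)
    rw [Fintype.card_congr e]
    exact aux_card_zero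
  have hone : Fintype.card {ab : F × F //
      ((1:F) * ab.1 - ab.2) * (ab.1 - (1:F) * ab.2) = (1:F) - (1:F) ^ 3} = Fintype.card F := by
    have e : {ab : F × F //
        ((1:F) * ab.1 - ab.2) * (ab.1 - (1:F) * ab.2) = (1:F) - (1:F) ^ 3} ≃ F :=
      { toFun := fun s => s.1.1
        invFun := fun a => ⟨(a, a), by ring⟩
        left_inv := fun s => by
          apply Subtype.ext
          obtain ⟨⟨a, b⟩, h⟩ := s
          have hab : a = b := by
            have h' : (a - b) * (a - b) = 0 := by linear_combination h
            have h'' := mul_self_eq_zero.mp h'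
            linear_combination h''
          exact Prod.ext rfl hab
        right_inv := fun a => rfl }
    rw [Fintype.card_congr e]
  have hmone : Fintype.card {ab : F × F //
      ((-1:F) * ab.1 - ab.2) * (ab.1 - (-1:F) * ab.2) = (-1:F) - (-1:F) ^ 3}
      = Fintype.card F := by
    have e : {ab : F × F //
        ((-1:F) * ab.1 - ab.2) * (ab.1 - (-1:F) * ab.2) = (-1:F) - (-1:F) ^ 3} ≃ F :=
      { toFun := fun s => s.1.1
        invFun := fun a => ⟨(a, -a), by ring⟩
        left_inv := fun s => by
          apply Subtype.ext
          obtain ⟨⟨a, b⟩, h⟩ := s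
          have hab : -a = b := by
            have h' : (a + b) * (a + b) = 0 := by linear_combination -h
            have h'' := mul_self_eq_zero.mp h'
            linear_combination -h''
          exact Prod.ext rfl hab
        right_inv := fun a => rfl }
    rw [Fintype.card_congr e]
  have hsum3 : ∑ z ∈ ({0, 1, -1} : Finset F),
      Fintype.card {ab : F × F // (z * ab.1 - ab.2) * (ab.1 - z * ab.2) = z - z ^ 3}
      = (Fintype.card F * Fintype.card F - (Fintype.card F - 1) * (Fintype.card F - 1))
        + Fintype.card F + Fintype.card F := by
    rw [Finset.sum_insert (by simp [h01, h0m1]),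
        Finset.sum_insert (by simp [h1m1]), Finset.sum_singleton, hzero, hone, hmone]
    ring
  rw [hgen, hsum3, ← hF]
  obtain ⟨k, hk⟩ : ∃ k, Fintype.card F = k + 3 := ⟨Fintype.card F - 3, by omega⟩
  rw [hk]
  have a1 : k + 3 - 3 = k := by omega
  have a2 : k + 3 - 1 = k + 2 := by omega
  rw [a1, a2]
  have a3 : (k + 3) * (k + 3) - (k + 2) * (k + 2) = 2 * k + 5 := by
    have : (k + 3) * (k + 3) = (k + 2) * (k + 2) + (2 * k + 5) := by ring
    rw [this, Nat.add_sub_cancel_left]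
  rw [a3]
  ring
end

section
/- Let q = 2^n. Then the number of triples (a,b,c) in F_q^3 with c^3 - a*b*c^2 + (a^2+b^2-1)*c - a*b = 0 equals q^2 + 1. -/
open Finset

lemma aux_mul_ne (F : Type) [Field F] [Fintype F] [DecidableEq F] (d : F) (hd : d ≠ 0) :
    Fintype.card {p : F × F // p.1 * p.2 = d} = Fintype.card F - 1 := by
  have e : {p : F × F // p.1 * p.2 = d} ≃ {x : F // x ≠ 0} :=
    { toFun := fun p => ⟨p.1.1, fun h => hd (by rw [← p.2, h, zero_mul])⟩
      invFun := fun u => ⟨(u.1, u.1⁻¹ * d), by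
        have := u.2; field_simp⟩
      left_inv := fun p => by
        obtain ⟨⟨a, b⟩, hp⟩ := p
        have ha : a ≠ 0 := fun h => hd (by rw [← hp, h, zero_mul])
        simp only [Subtype.mk.injEq, Prod.mk.injEq, true_and]
        rw [← hp]; field_simp
      right_inv := fun u => rfl }
  rw [Fintype.card_congr e, Fintype.card_congr (unitsEquivNeZero (G₀ := F)).symm,
    Fintype.card_units]

lemma aux_mul_zero (F : Type) [Field F] [Fintype F] [DecidableEq F] (d : F) (hd : d = 0) :
    Fintype.card {p : F × F // p.1 * p.2 = d}
      = Fintype.card F + (Fintype.card F - 1) := by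
  subst hd
  have e : {p : F × F // p.1 * p.2 = 0} ≃ F ⊕ {x : F // x ≠ 0} :=
    { toFun := fun p => if h : p.1.1 = 0 then Sum.inl p.1.2 else Sum.inr ⟨p.1.1, h⟩
      invFun := fun s => match s with
        | Sum.inl y => ⟨(0, y), by simp⟩
        | Sum.inr x => ⟨(x.1, 0), by simp⟩
      left_inv := fun p => by
        obtain ⟨⟨a, b⟩, hp⟩ := p
        by_cases h : a = 0
        · simp only [h, dif_pos]
        · have hb : b = 0 := by
            rcases mul_eq_zero.mp hp with h' | h'
            · exact absurd h' h
            · exact h'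
          simp only [dif_neg h, hb]
      right_inv := fun s => by
        match s with
        | Sum.inl y => simp
        | Sum.inr ⟨x, hx⟩ => simp [hx] }
  rw [Fintype.card_congr e, Fintype.card_sum,
    Fintype.card_congr (unitsEquivNeZero (G₀ := F)).symm, Fintype.card_units]

lemma aux_change (F : Type) [Field F] [Fintype F] [DecidableEq F]
    (h2 : (2 : F) = 0) (z d : F) (hz : z ≠ 1) :
    Fintype.card {p : F × F // (p.1 + z * p.2) * (z * p.1 + p.2) = d}
      = Fintype.card {p : F × F // p.1 * p.2 = d} := by
  have hz1 : z + 1 ≠ 0 := by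
    intro h
    exact hz (by linear_combination h - h2)
  have hw : ((z + 1) ^ 2) ≠ 0 := pow_ne_zero _ hz1
  set w : F := ((z + 1) ^ 2)⁻¹ with hwdef
  have hwmul : w * (z + 1) ^ 2 = 1 := inv_mul_cancel₀ hw
  have key1 : ∀ u v : F, (u + z * v) + z * (z * u + v) = (z + 1) ^ 2 * u := by
    intro u v; linear_combination (z * v - z * u) * h2
  have key2 : ∀ u v : F, z * (u + z * v) + (z * u + v) = (z + 1) ^ 2 * v := by
    intro u v; linear_combination (z * u - z * v) * h2
  have id1 : ∀ u v : F, (w * (u + z * v)) + z * (w * (z * u + v)) = u := by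
    intro u v
    calc (w * (u + z * v)) + z * (w * (z * u + v))
        = w * ((u + z * v) + z * (z * u + v)) := by ring
      _ = w * ((z + 1) ^ 2 * u) := by rw [key1]
      _ = (w * (z + 1) ^ 2) * u := by ring
      _ = u := by rw [hwmul, one_mul]
  have id2 : ∀ u v : F, z * (w * (u + z * v)) + (w * (z * u + v)) = v := by
    intro u v
    calc z * (w * (u + z * v)) + (w * (z * u + v))
        = w * (z * (u + z * v) + (z * u + v)) := by ring
      _ = w * ((z + 1) ^ 2 * v) := by rw [key2]
      _ = (w * (z + 1) ^ 2) * v := by ring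
      _ = v := by rw [hwmul, one_mul]
  have e : {p : F × F // (p.1 + z * p.2) * (z * p.1 + p.2) = d}
      ≃ {p : F × F // p.1 * p.2 = d} :=
    { toFun := fun p => ⟨(p.1.1 + z * p.1.2, z * p.1.1 + p.1.2), p.2⟩
      invFun := fun q => ⟨(w * (q.1.1 + z * q.1.2), w * (z * q.1.1 + q.1.2)), by
        have h1 := id1 q.1.1 q.1.2
        have h2' := id2 q.1.1 q.1.2
        show (w * (q.1.1 + z * q.1.2) + z * (w * (z * q.1.1 + q.1.2)))
            * (z * (w * (q.1.1 + z * q.1.2)) + w * (z * q.1.1 + q.1.2)) = d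
        rw [h1, h2', q.2]⟩
      left_inv := fun p => by
        obtain ⟨⟨x, y⟩, hp⟩ := p
        apply Subtype.ext
        show (w * ((x + z * y) + z * (z * x + y)), w * (z * (x + z * y) + (z * x + y))) = (x, y)
        rw [key1, key2]
        have e1 : w * ((z + 1) ^ 2 * x) = x := by
          rw [← mul_assoc, hwmul, one_mul]
        have e2 : w * ((z + 1) ^ 2 * y) = y := by
          rw [← mul_assoc, hwmul, one_mul]
        rw [e1, e2]
      right_inv := fun q => by
        obtain ⟨⟨u, v⟩, hq⟩ := q
        apply Subtype.ext
        show (w * (u + z * v) + z * (w * (z * u + v)),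
          z * (w * (u + z * v)) + w * (z * u + v)) = (u, v)
        rw [id1, id2] }
  exact Fintype.card_congr e

lemma aux_diag (F : Type) [Field F] [Fintype F] [DecidableEq F] (h2 : (2 : F) = 0) :
    Fintype.card {p : F × F //
        (p.1 + 1 * p.2) * (1 * p.1 + p.2) = 1 * (1 + 1 : F) ^ 2}
      = Fintype.card F := by
  have hcond : ∀ p : F × F,
      ((p.1 + 1 * p.2) * (1 * p.1 + p.2) = 1 * (1 + 1 : F) ^ 2) ↔ p.2 = p.1 := by
    intro p
    constructor
    · intro h
      have h' : (p.1 + p.2) * (p.1 + p.2) = 0 := by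
        linear_combination h + 2 * h2
      have hs := mul_self_eq_zero.mp h'
      linear_combination hs - p.1 * h2
    · intro h
      rw [h]
      linear_combination (2 * p.1 * p.1 - 2) * h2
  have e : {p : F × F // (p.1 + 1 * p.2) * (1 * p.1 + p.2) = 1 * (1 + 1 : F) ^ 2} ≃ F :=
    { toFun := fun p => p.1.1
      invFun := fun x => ⟨(x, x), (hcond (x, x)).mpr rfl⟩
      left_inv := fun p => by
        obtain ⟨⟨a, b⟩, hp⟩ := p
        have hb : b = a := (hcond (a, b)).mp hp
        exact Subtype.ext (Prod.ext rfl hb.symm)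
      right_inv := fun x => rfl }
  exact Fintype.card_congr e

theorem stmt_7 (n : ℕ) (hn : 0 < n)
    (F : Type) [Field F] [Fintype F] (hF : Fintype.card F = 2 ^ n) :
    Nat.card {v : F × F × F //
      v.2.2 ^ 3 - v.1 * v.2.1 * v.2.2 ^ 2 + (v.1 ^ 2 + v.2.1 ^ 2 - 1) * v.2.2
        - v.1 * v.2.1 = 0} = (2 ^ n) ^ 2 + 1 := by
  classical
  have h2 : (2 : F) = 0 := by
    have h0 : ((Fintype.card F : ℕ) : F) = 0 := FiniteField.cast_card_eq_zero F
    rw [hF] at h0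
    push_cast at h0
    exact (pow_eq_zero_iff hn.ne').mp h0
  have hPred : ∀ v : F × F × F,
      (v.2.2 ^ 3 - v.1 * v.2.1 * v.2.2 ^ 2 + (v.1 ^ 2 + v.2.1 ^ 2 - 1) * v.2.2
        - v.1 * v.2.1 = 0)
      ↔ ((v.1 + v.2.2 * v.2.1) * (v.2.2 * v.1 + v.2.1) = v.2.2 * (v.2.2 + 1) ^ 2) := by
    intro ⟨x, y, z⟩
    constructor
    · intro h
      linear_combination h + (x * y + z ^ 2 * x * y - z ^ 3 - z ^ 2) * h2
    · intro h
      linear_combination h - (x * y + z ^ 2 * x * y - z ^ 3 - z ^ 2) * h2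
  have e1 : {v : F × F × F //
      v.2.2 ^ 3 - v.1 * v.2.1 * v.2.2 ^ 2 + (v.1 ^ 2 + v.2.1 ^ 2 - 1) * v.2.2
        - v.1 * v.2.1 = 0}
      ≃ Σ z : F, {p : F × F // (p.1 + z * p.2) * (z * p.1 + p.2) = z * (z + 1) ^ 2} :=
    (Equiv.subtypeEquivRight hPred).trans
    { toFun := fun v => ⟨v.1.2.2, ⟨(v.1.1, v.1.2.1), v.2⟩⟩
      invFun := fun s => ⟨(s.2.1.1, s.2.1.2, s.1), s.2.2⟩
      left_inv := fun v => rfl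
      right_inv := fun s => rfl }
  rw [Nat.card_eq_fintype_card, Fintype.card_congr e1, Fintype.card_sigma]
  have hfib : ∀ z : F,
      Fintype.card {p : F × F // (p.1 + z * p.2) * (z * p.1 + p.2) = z * (z + 1) ^ 2}
      = (Fintype.card F - 1)
        + ((if z = 1 then 1 else 0) + if z = 0 then Fintype.card F else 0) := by
    intro z
    by_cases hz1 : z = 1
    · subst hz1
      rw [if_pos rfl, if_neg one_ne_zero, aux_diag F h2]
      have : 1 ≤ Fintype.card F := Fintype.card_pos
      omega
    · rw [if_neg hz1, aux_change F h2 z _ hz1]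
      have hz1' : z + 1 ≠ 0 := fun h => hz1 (by linear_combination h - h2)
      by_cases hz0 : z = 0
      · subst hz0
        rw [if_pos rfl, aux_mul_zero F _ (by ring)]
        have : 1 ≤ Fintype.card F := Fintype.card_pos
        omega
      · rw [if_neg hz0, aux_mul_ne F _ (mul_ne_zero hz0 (pow_ne_zero _ hz1'))]
        omega
  rw [Finset.sum_congr rfl (fun z _ => hfib z), Finset.sum_add_distrib,
    Finset.sum_add_distrib, Finset.sum_const, Finset.sum_ite_eq' Finset.univ (1 : F),
    Finset.sum_ite_eq' Finset.univ (0 : F), if_pos (Finset.mem_univ _),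
    if_pos (Finset.mem_univ _), Finset.card_univ, hF, smul_eq_mul]
  obtain ⟨t, ht⟩ : ∃ t, 2 ^ n = t + 1 :=
    ⟨2 ^ n - 1, by have : 0 < 2 ^ n := pow_pos (by norm_num) n; omega⟩
  rw [ht]
  simp only [Nat.add_sub_cancel]
  ring
end

section
/- Let p be a prime with p ≠ 2, p ≠ 5, and (5/p) = 1, and let q = p^n. Then the number of triples (a,b,c) in F_q^3 with c^4 - a*b*c^3 + (a^2+b^2-3)*c^2 - a*b*c + 1 = 0 equals q^2 + 4q + 3. -/
/-!
The polynomial factors as `f₁ = z (x - z y) (z x - y) + (z² - z - 1)(z² + z - 1)`. There are no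
points with `z = 0`. For `z ≠ 0, ±1` the substitution `(u, v) = (x - z y, z x - y)` is invertible and
turns the fibre over `z` into the hyperbola `z u v = -(z² - z - 1)(z² + z - 1)`, with `q - 1` points,
or into the cross `u v = 0`, with `2q - 1` points, exactly when `z` is one of the four roots
`(±1 ± √5)/2` (these exist and are distinct because `5` is a nonzero square and `2 ≠ 0`). For
`z = ±1` the fibre is the pair of lines `(x - z y)² = 1`, with `2q` points. Summing over `z` gives
`(q - 1)² + 2 (q + 1) + 4 q = q² + 4 q + 3`.
-/

open Finset Function

section
variable {K : Type*} [Field K]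

def f₁ (x y z : K) : K := z ^ 4 - x * y * z ^ 3 + (x ^ 2 + y ^ 2 - 3) * z ^ 2 - x * y * z + 1

lemma f₁_eq (x y z : K) :
    f₁ x y z = z * (x - z * y) * (z * x - y) + (z ^ 2 - z - 1) * (z ^ 2 + z - 1) := by
  unfold f₁; ring

lemma injective_sub_mul_prod_mul_sub {z : K} (hz : z ^ 2 ≠ 1) :
    Injective fun p : K × K => (p.1 - z * p.2, z * p.1 - p.2) := by
  rintro ⟨x, y⟩ ⟨x', y'⟩ h
  simp only [Prod.mk.injEq] at h
  obtain ⟨h₁, h₂⟩ := h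
  have hy : y = y' := by
    have : (z ^ 2 - 1) * (y - y') = 0 := by linear_combination h₂ - z * h₁
    simpa [sub_eq_zero, hz] using this
  subst hy
  exact Prod.ext (by linear_combination h₁) rfl

variable [Fintype K] [DecidableEq K]

lemma card_subtype_mul_eq (c : K) :
    Fintype.card {p : K × K // p.1 * p.2 = c} =
      Fintype.card K - 1 + if c = 0 then Fintype.card K else 0 := by
  have hunit : ∀ u ∈ univ.erase (0 : K), Fintype.card {v // u * v = c} = 1 := fun u hu =>
    Fintype.card_eq_one_iff.2 ⟨⟨c / u, mul_div_cancel₀ c (ne_of_mem_erase hu)⟩,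
      fun ⟨v, hv⟩ => Subtype.ext (eq_div_of_mul_eq (ne_of_mem_erase hu) (by rwa [mul_comm]))⟩
  rw [Fintype.card_congr (Equiv.subtypeProdEquivSigmaSubtype fun u v => u * v = c),
    Fintype.card_sigma, ← add_sum_erase _ _ (mem_univ 0), sum_congr rfl hunit, sum_const,
    card_erase_of_mem (mem_univ 0), card_univ, smul_eq_mul, mul_one, add_comm]
  simp only [zero_mul]
  split_ifs with hc
  · simp [hc]
  · simp [Ne.symm hc]

lemma card_fiber_f₁_of_sq_ne_one {z : K} (hz₀ : z ≠ 0) (hz₁ : z ^ 2 ≠ 1) :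
    Fintype.card {p : K × K // f₁ p.1 p.2 z = 0} =
      Fintype.card K - 1 + if (z ^ 2 - z - 1) * (z ^ 2 + z - 1) = 0 then Fintype.card K else 0 := by
  let e := Equiv.ofBijective _
    (Finite.injective_iff_bijective.1 (injective_sub_mul_prod_mul_sub hz₁))
  have hf : ∀ p : K × K, f₁ p.1 p.2 z = 0 ↔
      (p.1 - z * p.2) * (z * p.1 - p.2) = -((z ^ 2 - z - 1) * (z ^ 2 + z - 1)) / z := fun p => by
    rw [f₁_eq, eq_div_iff hz₀]
    constructor <;> intro h <;> linear_combination h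
  rw [Fintype.card_congr
    (e.subtypeEquiv (q := fun u => u.1 * u.2 = -((z ^ 2 - z - 1) * (z ^ 2 + z - 1)) / z) hf),
    card_subtype_mul_eq]
  simp [hz₀]

variable [NeZero (2 : K)]

lemma card_filter_quadratic_eq_zero {a b c s : K} (ha : a ≠ 0) (hs : s ≠ 0)
    (h : discrim a b c = s * s) : #{x | a * (x * x) + b * x + c = 0} = 2 := by
  have hroots : ({x | a * (x * x) + b * x + c = 0} : Finset K) =
      {(-b + s) / (2 * a), (-b - s) / (2 * a)} := by
    ext x; simp [quadratic_eq_zero_iff ha h]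
  rw [hroots, card_pair]
  rw [Ne, div_left_inj' (mul_ne_zero two_ne_zero ha)]
  intro h'
  have h2s : (2 : K) * s = 0 := by linear_combination h'
  exact hs ((mul_eq_zero.1 h2s).resolve_left two_ne_zero)

lemma card_filter_sq_eq_one_s8 : #{z : K | z ^ 2 = 1} = 2 := by
  simp_rw [← sub_eq_zero (b := (1 : K)), show ∀ z : K, z ^ 2 - 1 = 1 * (z * z) + 0 * z + -1 from
    fun z => by ring]
  exact card_filter_quadratic_eq_zero one_ne_zero two_ne_zero (by rw [discrim]; ring)

lemma card_filter_golden_eq_zero (h5 : (5 : K) ≠ 0) (hsq : IsSquare (5 : K)) :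
    #{z : K | (z ^ 2 - z - 1) * (z ^ 2 + z - 1) = 0} = 4 := by
  obtain ⟨r, hr⟩ := hsq
  have hr0 : r ≠ 0 := by rintro rfl; exact h5 (by simpa using hr)
  have hdisj : Disjoint (α := Finset K) {z | z ^ 2 - z - 1 = 0} {z | z ^ 2 + z - 1 = 0} := by
    refine disjoint_filter.2 fun z _ h₁ h₂ => ?_
    have hz : (2 : K) * z = 0 := by linear_combination h₂ - h₁
    obtain rfl := (mul_eq_zero.1 hz).resolve_left two_ne_zero
    norm_num at h₁
  simp only [mul_eq_zero, filter_or]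
  rw [card_union_of_disjoint hdisj]
  simp_rw [show ∀ z : K, z ^ 2 - z - 1 = 1 * (z * z) + -1 * z + -1 from fun z => by ring,
    show ∀ z : K, z ^ 2 + z - 1 = 1 * (z * z) + 1 * z + -1 from fun z => by ring]
  rw [card_filter_quadratic_eq_zero one_ne_zero hr0 (by rw [discrim, ← hr]; ring),
    card_filter_quadratic_eq_zero one_ne_zero hr0 (by rw [discrim, ← hr]; ring)]

lemma card_fiber_f₁_of_sq_eq_one {z : K} (hz : z ^ 2 = 1) :
    Fintype.card {p : K × K // f₁ p.1 p.2 z = 0} = 2 * Fintype.card K := by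
  let shear : K × K ≃ K × K :=
    { toFun := fun p => (p.1 - z * p.2, p.2)
      invFun := fun p => (p.1 + z * p.2, p.2)
      left_inv := fun p => by simp
      right_inv := fun p => by simp }
  have hf : ∀ p : K × K, f₁ p.1 p.2 z = 0 ↔ (p.1 - z * p.2) ^ 2 = 1 := fun p => by
    rw [f₁_eq]
    constructor <;> intro h
    · linear_combination h - ((p.1 - z * p.2) * p.1 + z ^ 2 - 2) * hz
    · linear_combination h + ((p.1 - z * p.2) * p.1 + z ^ 2 - 2) * hz
  rw [Fintype.card_congr ((shear.subtypeEquiv (q := fun p => p.1 ^ 2 = 1) hf).trans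
    (Equiv.prodSubtypeFstEquivSubtypeProd (p := fun w => w ^ 2 = 1))), Fintype.card_prod,
    Fintype.card_subtype, card_filter_sq_eq_one_s8]

-- Written as a sum of indicator terms so that the sum over `z` splits into three counts.
lemma card_fiber_f₁ (z : K) :
    Fintype.card {p : K × K // f₁ p.1 p.2 z = 0} =
      (if z ≠ 0 then Fintype.card K - 1 else 0) + (if z ^ 2 = 1 then Fintype.card K + 1 else 0) +
        if (z ^ 2 - z - 1) * (z ^ 2 + z - 1) = 0 then Fintype.card K else 0 := by
  have hq : 0 < Fintype.card K := Fintype.card_pos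
  by_cases hz₀ : z = 0
  · subst hz₀
    simp [f₁]
  by_cases hz₁ : z ^ 2 = 1
  · have hQ : (z ^ 2 - z - 1) * (z ^ 2 + z - 1) = -1 := by linear_combination (z ^ 2 - 2) * hz₁
    rw [card_fiber_f₁_of_sq_eq_one hz₁, hQ]
    simp only [ne_eq, hz₀, not_false_eq_true, if_true, hz₁, neg_eq_zero, one_ne_zero, if_false]
    omega
  · rw [card_fiber_f₁_of_sq_ne_one hz₀ hz₁]
    simp [hz₀, hz₁]

theorem card_f₁_eq_zero (h5 : (5 : K) ≠ 0) (hsq : IsSquare (5 : K)) :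
    Fintype.card {v : K × K × K // f₁ v.1 v.2.1 v.2.2 = 0} =
      Fintype.card K ^ 2 + 4 * Fintype.card K + 3 := by
  have hq : 0 < Fintype.card K := Fintype.card_pos
  let e : {v : K × K × K // f₁ v.1 v.2.1 v.2.2 = 0} ≃ Σ z : K, {p : K × K // f₁ p.1 p.2 z = 0} :=
    { toFun := fun v => ⟨v.1.2.2, (v.1.1, v.1.2.1), v.2⟩
      invFun := fun s => ⟨(s.2.1.1, s.2.1.2, s.1), s.2.2⟩
      left_inv := fun _ => rfl
      right_inv := fun _ => rfl }
  rw [Fintype.card_congr e, Fintype.card_sigma]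
  simp only [card_fiber_f₁, sum_add_distrib, ← sum_filter, sum_const, smul_eq_mul,
    card_filter_sq_eq_one_s8, card_filter_golden_eq_zero h5 hsq, filter_ne', card_erase_of_mem (mem_univ _),
    card_univ]
  zify [hq]
  ring

end

lemma ne_zero_and_isSquare_of_legendreSym_eq_one {p : ℕ} [Fact p.Prime] {F : Type*} [Field F]
    [CharP F p] {a : ℤ} (h : legendreSym p a = 1) : (a : F) ≠ 0 ∧ IsSquare (a : F) := by
  have ha : (a : ZMod p) ≠ 0 := fun h0 => by simp [(legendreSym.eq_zero_iff p a).2 h0] at h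
  have hmap : ∀ x : ZMod p, ZMod.castHom (dvd_refl p) F x = 0 ↔ x = 0 :=
    fun x => map_eq_zero_iff _ (ZMod.castHom (dvd_refl p) F).injective
  refine ⟨?_, ?_⟩
  · simpa using (hmap a).not.2 ha
  · simpa using ((legendreSym.eq_one_iff p ha).1 h).map (ZMod.castHom (dvd_refl p) F)

theorem stmt_8_general (p n : ℕ) [Fact p.Prime] (h2 : p ≠ 2)
    (hleg : legendreSym p 5 = 1)
    (F : Type) [Field F] [Fintype F] (hF : Fintype.card F = p ^ n) :
    Nat.card {v : F × F × F //
      v.2.2 ^ 4 - v.1 * v.2.1 * v.2.2 ^ 3 + (v.1 ^ 2 + v.2.1 ^ 2 - 3) * v.2.2 ^ 2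
        - v.1 * v.2.1 * v.2.2 + 1 = 0} = (p ^ n) ^ 2 + 4 * p ^ n + 3 := by
  classical
  have : CharP F p := charP_of_card_eq_prime_pow hF
  have : NeZero (2 : F) := ⟨Ring.two_ne_zero (by rwa [ringChar.eq F p])⟩
  obtain ⟨h5, hsq⟩ := ne_zero_and_isSquare_of_legendreSym_eq_one (F := F) hleg
  rw [Int.cast_ofNat] at h5 hsq
  rw [Nat.card_eq_fintype_card, ← hF]
  exact card_f₁_eq_zero h5 hsq

theorem stmt_8 (p n : ℕ) [Fact p.Prime] (h2 : p ≠ 2) (h5 : p ≠ 5) (hn : 0 < n)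
    (hleg : legendreSym p 5 = 1)
    (F : Type) [Field F] [Fintype F] (hF : Fintype.card F = p ^ n) :
    Nat.card {v : F × F × F //
      v.2.2 ^ 4 - v.1 * v.2.1 * v.2.2 ^ 3 + (v.1 ^ 2 + v.2.1 ^ 2 - 3) * v.2.2 ^ 2
        - v.1 * v.2.1 * v.2.2 + 1 = 0} = (p ^ n) ^ 2 + 4 * p ^ n + 3 :=
  stmt_8_general p n h2 hleg F hF
end

section
/- Let q = 5^n. Then the number of triples (a,b,c) in F_q^3 with c^4 - a*b*c^3 + (a^2+b^2-3)*c^2 - a*b*c + 1 = 0 equals q^2 + 2q + 3. -/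
open Finset

section Aux

variable {F : Type} [Field F] [Fintype F] [DecidableEq F]

lemma card_filter_ne_zero :
    (Finset.univ.filter fun s : F => s ≠ 0).card = Fintype.card F - 1 := by
  rw [Finset.filter_ne', Finset.card_erase_of_mem (Finset.mem_univ 0), Finset.card_univ]

omit [Field F] in
lemma count_or (a b : F) :
    (∑ x : F, if x = a ∨ x = b then 1 else 0) = if a = b then 1 else 2 := by
  have h : ∀ x : F, (x = a ∨ x = b) ↔ x ∈ ({a, b} : Finset F) := by
    intro x; simp
  rw [Finset.sum_congr rfl (fun x _ => by rw [if_congr (h x) rfl rfl])]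
  rw [Finset.sum_ite_mem, Finset.univ_inter, Finset.sum_const, smul_eq_mul, mul_one]
  by_cases hab : a = b
  · subst hab; simp
  · rw [Finset.card_pair hab, if_neg hab]

lemma fiber_generic (z c : F) (hz2 : 1 - z ^ 2 ≠ 0) (hc : c ≠ 0) :
    (Finset.univ.filter fun p : F × F => (p.1 - z * p.2) * (z * p.1 - p.2) = c).card
      = Fintype.card F - 1 := by
  rw [← card_filter_ne_zero]
  refine Finset.card_bij' (fun p _ => p.1 - z * p.2)
    (fun s _ => ((s - z * (c / s)) / (1 - z ^ 2), (z * s - c / s) / (1 - z ^ 2)))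
    ?_ ?_ ?_ ?_
  · intro p hp
    rw [Finset.mem_filter] at hp
    simp only [Finset.mem_filter, Finset.mem_univ, true_and]
    intro h0
    rw [h0, zero_mul] at hp
    exact hc hp.2.symm
  · intro s hs
    rw [Finset.mem_filter] at hs
    have hs0 : s ≠ 0 := hs.2
    simp only [Finset.mem_filter, Finset.mem_univ, true_and]
    field_simp
    ring
  · intro p hp
    rw [Finset.mem_filter] at hp
    have hp2 := hp.2
    have hs0 : p.1 - z * p.2 ≠ 0 := by
      intro h0; rw [h0, zero_mul] at hp2; exact hc hp2.symm
    have hct : c / (p.1 - z * p.2) = z * p.1 - p.2 := by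
      rw [← hp2]; field_simp
    ext
    · simp only [hct]; field_simp; ring
    · simp only [hct]; field_simp; ring
  · intro s hs
    rw [Finset.mem_filter] at hs
    have hs0 : s ≠ 0 := hs.2
    field_simp
    ring

end Aux

theorem stmt_10 (n : ℕ) (hn : 0 < n)
    (F : Type) [Field F] [Fintype F] (hF : Fintype.card F = 5 ^ n) :
    Nat.card {v : F × F × F //
      v.2.2 ^ 4 - v.1 * v.2.1 * v.2.2 ^ 3 + (v.1 ^ 2 + v.2.1 ^ 2 - 3) * v.2.2 ^ 2
        - v.1 * v.2.1 * v.2.2 + 1 = 0} = (5 ^ n) ^ 2 + 2 * 5 ^ n + 3 := by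
  classical
  have hq5 : 5 ≤ Fintype.card F := by
    rw [hF]
    calc 5 = 5 ^ 1 := (pow_one 5).symm
    _ ≤ 5 ^ n := Nat.pow_le_pow_right (by norm_num) hn
  have h5 : (5 : F) = 0 := by
    have h := FiniteField.cast_card_eq_zero F
    rw [hF] at h
    push_cast at h
    exact pow_eq_zero_iff hn.ne' |>.mp h
  have h2 : (2 : F) ≠ 0 := by
    intro h
    have h1 : (1 : F) = 0 := by
      rw [show (1 : F) = 5 - 2 * 2 by norm_num, h5, h]; ring
    exact one_ne_zero h1
  have h1n : (1 : F) ≠ -1 := by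
    intro h
    apply h2
    rw [show (2 : F) = 1 - (-1) by norm_num, ← h, sub_self]
  -- square root of -1
  obtain ⟨i, hi⟩ : ∃ i : F, i ^ 2 = -1 := by
    have hsq : IsSquare (-1 : F) := by
      rw [FiniteField.isSquare_neg_one_iff, hF, Nat.pow_mod]
      norm_num
    obtain ⟨r, hr⟩ := hsq
    exact ⟨r, by rw [sq]; exact hr.symm⟩
  have hi0 : i ≠ 0 := by
    intro h
    rw [h] at hi
    norm_num at hi
  have hi1 : i ≠ 1 := by
    intro h; rw [h, one_pow] at hi; exact h1n hi
  have him1 : i ≠ -1 := by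
    intro h; rw [h, neg_one_sq] at hi; exact h1n hi
  have himi : i ≠ -i := by
    intro h
    apply hi0
    have h' : (2 : F) * i = 0 := by linear_combination h
    rcases mul_eq_zero.mp h' with h'' | h''
    · exact absurd h'' h2
    · exact h''
  set f : F → F → F → F := fun x y z =>
    z ^ 4 - x * y * z ^ 3 + (x ^ 2 + y ^ 2 - 3) * z ^ 2 - x * y * z + 1 with hfdef
  set g : F → ℕ := fun z => ∑ x : F, ∑ y : F, if f x y z = 0 then 1 else 0 with hgdef
  have key : ∀ x y z : F, f x y z = z * (x - z * y) * (z * x - y) + (z ^ 2 + 1) ^ 2 := by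
    intro x y z
    simp only [hfdef]
    linear_combination (-(z ^ 2)) * h5
  -- reduce to sum over z
  have hcard : Nat.card {v : F × F × F //
      v.2.2 ^ 4 - v.1 * v.2.1 * v.2.2 ^ 3 + (v.1 ^ 2 + v.2.1 ^ 2 - 3) * v.2.2 ^ 2
        - v.1 * v.2.1 * v.2.2 + 1 = 0} = ∑ z : F, g z := by
    rw [Nat.card_eq_fintype_card, Fintype.card_subtype, Finset.card_filter]
    rw [Fintype.sum_prod_type]
    have step1 : ∀ x : F, (∑ v : F × F, if (x, v).2.2 ^ 4 - (x, v).1 * (x, v).2.1 * (x, v).2.2 ^ 3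
            + ((x, v).1 ^ 2 + (x, v).2.1 ^ 2 - 3) * (x, v).2.2 ^ 2
            - (x, v).1 * (x, v).2.1 * (x, v).2.2 + 1 = 0 then 1 else 0)
        = ∑ y : F, ∑ z : F, if f x y z = 0 then 1 else 0 := by
      intro x
      rw [Fintype.sum_prod_type]
    calc (∑ x : F, ∑ v : F × F, if (x, v).2.2 ^ 4 - (x, v).1 * (x, v).2.1 * (x, v).2.2 ^ 3
            + ((x, v).1 ^ 2 + (x, v).2.1 ^ 2 - 3) * (x, v).2.2 ^ 2
            - (x, v).1 * (x, v).2.1 * (x, v).2.2 + 1 = 0 then 1 else 0)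
        = ∑ x : F, ∑ y : F, ∑ z : F, if f x y z = 0 then 1 else 0 :=
          Finset.sum_congr rfl fun x _ => step1 x
      _ = ∑ x : F, ∑ z : F, ∑ y : F, if f x y z = 0 then 1 else 0 :=
          Finset.sum_congr rfl fun x _ => Finset.sum_comm
      _ = ∑ z : F, g z := Finset.sum_comm
  rw [hcard]
  -- fiber values
  have hg0 : g 0 = 0 := by
    simp only [hgdef, hfdef]
    norm_num
  have hg1 : g 1 = Fintype.card F * 2 := by
    have hcond : ∀ x y : F, (f x y 1 = 0) ↔ (y = x - 1 ∨ y = x + 1) := by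
      intro x y
      have hfx : f x y 1 = (y - (x - 1)) * (y - (x + 1)) := by
        simp only [hfdef]; ring
      rw [hfx, mul_eq_zero, sub_eq_zero, sub_eq_zero]
    calc g 1 = ∑ x : F, ∑ y : F, if y = x - 1 ∨ y = x + 1 then 1 else 0 := by
          simp only [hgdef]
          exact Finset.sum_congr rfl fun x _ => Finset.sum_congr rfl fun y _ =>
            if_congr (hcond x y) rfl rfl
      _ = ∑ _x : F, 2 := Finset.sum_congr rfl fun x _ => by
          rw [count_or, if_neg]
          intro h
          exact h2 (by linear_combination -h)
      _ = Fintype.card F * 2 := by rw [Finset.sum_const, Finset.card_univ, smul_eq_mul]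
  have hgm1 : g (-1) = Fintype.card F * 2 := by
    have hcond : ∀ x y : F, (f x y (-1) = 0) ↔ (y = 1 - x ∨ y = -1 - x) := by
      intro x y
      have hfx : f x y (-1) = (y - (1 - x)) * (y - (-1 - x)) := by
        simp only [hfdef]; ring
      rw [hfx, mul_eq_zero, sub_eq_zero, sub_eq_zero]
    calc g (-1) = ∑ x : F, ∑ y : F, if y = 1 - x ∨ y = -1 - x then 1 else 0 := by
          simp only [hgdef]
          exact Finset.sum_congr rfl fun x _ => Finset.sum_congr rfl fun y _ =>
            if_congr (hcond x y) rfl rfl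
      _ = ∑ _x : F, 2 := Finset.sum_congr rfl fun x _ => by
          rw [count_or, if_neg]
          intro h
          exact h2 (by linear_combination h)
      _ = Fintype.card F * 2 := by rw [Finset.sum_const, Finset.card_univ, smul_eq_mul]
  have hgi : ∀ j : F, j ^ 2 = -1 → g j = Fintype.card F + (Fintype.card F - 1) := by
    intro j hj
    have hj0 : j ≠ 0 := by intro h; rw [h] at hj; norm_num at hj
    have hcond : ∀ x y : F, (f x y j = 0) ↔ (y = j * x ∨ y = -(j * x)) := by
      intro x y
      have hfj : f x y j = -((y - j * x) * (y - -(j * x))) := by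
        simp only [hfdef]
        linear_combination (j ^ 2 - x * y * j + y ^ 2 - 4) * hj + h5
      rw [hfj, neg_eq_zero, mul_eq_zero, sub_eq_zero, sub_eq_zero]
    calc g j = ∑ x : F, ∑ y : F, if y = j * x ∨ y = -(j * x) then 1 else 0 := by
          simp only [hgdef]
          exact Finset.sum_congr rfl fun x _ => Finset.sum_congr rfl fun y _ =>
            if_congr (hcond x y) rfl rfl
      _ = ∑ x : F, if x = 0 then 1 else 2 := by
          refine Finset.sum_congr rfl fun x _ => ?_
          rw [count_or]
          by_cases hx : x = 0
          · rw [if_pos hx, if_pos (by rw [hx]; ring)]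
          · rw [if_neg hx, if_neg ?_]
            intro h
            have h' : (2 : F) * (j * x) = 0 := by linear_combination h
            rcases mul_eq_zero.mp h' with h'' | h''
            · exact h2 h''
            · rcases mul_eq_zero.mp h'' with h3 | h3
              · exact hj0 h3
              · exact hx h3
      _ = Fintype.card F + (Fintype.card F - 1) := by
          have hsplit2 : ∀ x : F, (if x = 0 then 1 else 2) = 1 + if x ≠ 0 then 1 else 0 := by
            intro x; by_cases hx : x = 0 <;> simp [hx]
          rw [Finset.sum_congr rfl fun x _ => hsplit2 x, Finset.sum_add_distrib,
            Finset.sum_const, Finset.card_univ, smul_eq_mul, mul_one,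
            ← Finset.card_filter, card_filter_ne_zero]
  have hggen : ∀ z : F, z ≠ 0 → z ≠ 1 → z ≠ -1 → z ≠ i → z ≠ -i →
      g z = Fintype.card F - 1 := by
    intro z hz0 hz1 hzm1 hzi hzmi
    have hz2 : 1 - z ^ 2 ≠ 0 := by
      intro h
      have hmm : (1 - z) * (1 + z) = 0 := by linear_combination h
      rcases mul_eq_zero.mp hmm with h' | h'
      · exact hz1 (by linear_combination -h')
      · exact hzm1 (by linear_combination h')
    have hzsq : z ^ 2 + 1 ≠ 0 := by
      intro h
      have hmm : (z - i) * (z + i) = 0 := by linear_combination h - hi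
      rcases mul_eq_zero.mp hmm with h' | h'
      · exact hzi (by linear_combination h')
      · exact hzmi (by linear_combination h')
    set c : F := -((z ^ 2 + 1) ^ 2) * z⁻¹ with hcdef
    have hc : c ≠ 0 := by
      apply mul_ne_zero
      · exact neg_ne_zero.mpr (pow_ne_zero 2 hzsq)
      · exact inv_ne_zero hz0
    have hzinv : z * z⁻¹ = 1 := mul_inv_cancel₀ hz0
    have hfz : ∀ x y : F, f x y z = z * ((x - z * y) * (z * x - y) - c) := by
      intro x y
      simp only [hfdef, hcdef]
      linear_combination (-(z ^ 2)) * h5 + (-((z ^ 2 + 1) ^ 2)) * hzinv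
    have hcond : ∀ x y : F, (f x y z = 0) ↔ ((x - z * y) * (z * x - y) = c) := by
      intro x y
      rw [hfz x y, mul_eq_zero, sub_eq_zero]
      simp [hz0]
    calc g z = ∑ p : F × F, if (p.1 - z * p.2) * (z * p.1 - p.2) = c then 1 else 0 := by
          simp only [hgdef]
          rw [Fintype.sum_prod_type]
          exact Finset.sum_congr rfl fun x _ => Finset.sum_congr rfl fun y _ =>
            if_congr (hcond x y) rfl rfl
      _ = (Finset.univ.filter fun p : F × F =>
            (p.1 - z * p.2) * (z * p.1 - p.2) = c).card := (Finset.card_filter _ _).symm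
      _ = Fintype.card F - 1 := fiber_generic z c hz2 hc
  -- assemble
  set s : Finset F := {0, 1, -1, i, -i} with hsdef
  have m4 : i ∉ ({-i} : Finset F) := Finset.notMem_singleton.mpr himi
  have m3 : (-1 : F) ∉ ({i, -i} : Finset F) := by
    simp only [Finset.mem_insert, Finset.mem_singleton]
    push_neg
    exact ⟨fun h => him1 h.symm, fun h => hi1 (by linear_combination h)⟩
  have m2 : (1 : F) ∉ ({-1, i, -i} : Finset F) := by
    simp only [Finset.mem_insert, Finset.mem_singleton]
    push_neg
    exact ⟨h1n, fun h => hi1 h.symm, fun h => him1 (by linear_combination h)⟩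
  have m1 : (0 : F) ∉ ({1, -1, i, -i} : Finset F) := by
    simp only [Finset.mem_insert, Finset.mem_singleton]
    push_neg
    refine ⟨fun h => one_ne_zero h.symm, fun h => one_ne_zero (by linear_combination h),
      fun h => hi0 h.symm, fun h => hi0 (by linear_combination h)⟩
  have hscard : s.card = 5 := by
    rw [hsdef, Finset.card_insert_of_notMem m1, Finset.card_insert_of_notMem m2,
      Finset.card_insert_of_notMem m3, Finset.card_insert_of_notMem m4,
      Finset.card_singleton]
  have hsum_s : ∑ z ∈ s, g z = g 0 + (g 1 + (g (-1) + (g i + g (-i)))) := by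
    rw [hsdef, Finset.sum_insert m1, Finset.sum_insert m2, Finset.sum_insert m3,
      Finset.sum_insert m4, Finset.sum_singleton]
  have hsplit : ∑ z : F, g z = ∑ z ∈ Finset.univ \ s, g z + ∑ z ∈ s, g z :=
    (Finset.sum_sdiff (Finset.subset_univ s)).symm
  have hgen : ∑ z ∈ Finset.univ \ s, g z = (Fintype.card F - 5) * (Fintype.card F - 1) := by
    have hconst : ∀ z ∈ Finset.univ \ s, g z = Fintype.card F - 1 := by
      intro z hz
      rw [Finset.mem_sdiff, hsdef] at hz
      simp only [Finset.mem_insert, Finset.mem_singleton] at hz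
      push_neg at hz
      obtain ⟨-, hz0, hz1, hzm1, hzi, hzmi⟩ := hz
      exact hggen z hz0 hz1 hzm1 hzi hzmi
    rw [Finset.sum_congr rfl hconst, Finset.sum_const, smul_eq_mul,
      Finset.card_sdiff_of_subset (Finset.subset_univ s), Finset.card_univ, hscard]
  rw [hsplit, hsum_s, hgen, hg0, hg1, hgm1, hgi i hi, hgi (-i) (by rw [neg_sq]; exact hi), hF]
  obtain ⟨k, hk⟩ : ∃ k, 5 ^ n = k + 5 := ⟨5 ^ n - 5, by rw [hF] at hq5; omega⟩
  rw [hk]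
  have e1 : k + 5 - 5 = k := by omega
  have e2 : k + 5 - 1 = k + 4 := by omega
  rw [e1, e2]
  ring
end

section
/- Let k be an algebraically closed field of characteristic different from 2, and let S_2 ⊂ P^2 × P^1 be the surface defined by F_2 = u^2 z^3 - x y z^2 w + (x^2 + y^2 - u^2) z w^2 - x y w^3. Then the singular points of S_2 are exactly the four points (1:0:0, 1:0), (0:1:0, 1:0), (1:1:0, 1:1), (1:-1:0, 1:-1). -/
/-!
On the affine cone, `∂F/∂x + ∂F/∂y = -(x + y) w (z - w)²` and
`∂F/∂x - ∂F/∂y = (x - y) w (z + w)²`. So either `w = 0`, and then `∂F/∂u` and `∂F/∂w` force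
`u = 0` and `x y = 0`; or `z = w` with `x = y`, or `z = -w` with `x = -y`, and then `∂F/∂z`
forces `u = 0`; in the remaining case `x = y = 0`, and `∂F/∂u`, `∂F/∂z` force `u = 0` or
`w = 0`, which is impossible. Every partial derivative is bihomogeneous, so the Jacobian
conditions do not depend on the chosen representatives.
-/

open MvPolynomial

/-- The bihomogeneous polynomial `F₂ = u²z³ - xyz²w + (x²+y²-u²)zw² - xyw³`
in variables `x = X 0`, `y = X 1`, `u = X 2`, `z = X 3`, `w = X 4`. -/
noncomputable def F2poly (k : Type) [CommRing k] : MvPolynomial (Fin 5) k :=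
  X 2 ^ 2 * X 3 ^ 3 - X 0 * X 1 * X 3 ^ 2 * X 4
    + (X 0 ^ 2 + X 1 ^ 2 - X 2 ^ 2) * X 3 * X 4 ^ 2 - X 0 * X 1 * X 4 ^ 3

def IsSingularF2 {k : Type} [CommRing k] (v : Fin 3 → k) (q : Fin 2 → k) : Prop :=
  eval ![v 0, v 1, v 2, q 0, q 1] (F2poly k) = 0 ∧
    ∀ i : Fin 5, eval ![v 0, v 1, v 2, q 0, q 1] (pderiv i (F2poly k)) = 0

section Jacobian

variable {k : Type} [CommRing k]

theorem isSingularF2_iff (v : Fin 3 → k) (q : Fin 2 → k) :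
    IsSingularF2 v q ↔
      v 2 ^ 2 * q 0 ^ 3 - v 0 * v 1 * q 0 ^ 2 * q 1
          + (v 0 ^ 2 + v 1 ^ 2 - v 2 ^ 2) * q 0 * q 1 ^ 2 - v 0 * v 1 * q 1 ^ 3 = 0 ∧
        -(v 1 * q 0 ^ 2 * q 1) + 2 * v 0 * q 0 * q 1 ^ 2 - v 1 * q 1 ^ 3 = 0 ∧
        -(v 0 * q 0 ^ 2 * q 1) + 2 * v 1 * q 0 * q 1 ^ 2 - v 0 * q 1 ^ 3 = 0 ∧
        2 * v 2 * q 0 ^ 3 - 2 * v 2 * q 0 * q 1 ^ 2 = 0 ∧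
        3 * v 2 ^ 2 * q 0 ^ 2 - 2 * v 0 * v 1 * q 0 * q 1
          + (v 0 ^ 2 + v 1 ^ 2 - v 2 ^ 2) * q 1 ^ 2 = 0 ∧
        -(v 0 * v 1 * q 0 ^ 2) + 2 * (v 0 ^ 2 + v 1 ^ 2 - v 2 ^ 2) * q 0 * q 1
          - 3 * v 0 * v 1 * q 1 ^ 2 = 0 := by
  simp only [IsSingularF2, Fin.forall_fin_succ, IsEmpty.forall_iff, and_true]
  simp [F2poly]
  intro
  ring_nf

theorem IsSingularF2.smul {v : Fin 3 → k} {q : Fin 2 → k} (h : IsSingularF2 v q) (a b : k) :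
    IsSingularF2 (a • v) (b • q) := by
  simp only [isSingularF2_iff, Pi.smul_apply, smul_eq_mul] at h ⊢
  obtain ⟨hF, h0, h1, h2, h3, h4⟩ := h
  refine ⟨?_, ?_, ?_, ?_, ?_, ?_⟩
  · linear_combination a ^ 2 * b ^ 3 * hF
  · linear_combination a * b ^ 3 * h0
  · linear_combination a * b ^ 3 * h1
  · linear_combination a * b ^ 3 * h2
  · linear_combination a ^ 2 * b ^ 2 * h3
  · linear_combination a ^ 2 * b ^ 2 * h4

end Jacobian

section Classification

variable {k : Type} [Field k]

theorem isSingularF2_units_smul_iff {v : Fin 3 → k} {q : Fin 2 → k} (a b : kˣ) :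
    IsSingularF2 (a • v) (b • q) ↔ IsSingularF2 v q := by
  refine ⟨fun h => ?_, fun h => h.smul a b⟩
  simpa [Units.smul_def, smul_smul] using h.smul (a⁻¹ : kˣ) (b⁻¹ : kˣ)

theorem isSingularF2_rep_mk_iff {v : Fin 3 → k} {q : Fin 2 → k} (hv : v ≠ 0) (hq : q ≠ 0) :
    IsSingularF2 (Projectivization.mk k v hv).rep (Projectivization.mk k q hq).rep ↔
      IsSingularF2 v q := by
  obtain ⟨a, ha⟩ := Projectivization.exists_smul_eq_mk_rep k v hv
  obtain ⟨b, hb⟩ := Projectivization.exists_smul_eq_mk_rep k q hq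
  rw [← ha, ← hb, isSingularF2_units_smul_iff]

theorem F2_partials_zero_of_w_eq_zero (h2 : (2 : k) ≠ 0) {x y u z : k} (hz : z ≠ 0)
    (e2 : 2 * u * z ^ 3 - 2 * u * z * 0 ^ 2 = 0)
    (e4 : -(x * y * z ^ 2) + 2 * (x ^ 2 + y ^ 2 - u ^ 2) * z * 0 - 3 * x * y * 0 ^ 2 = 0) :
    u = 0 ∧ (x = 0 ∨ y = 0) := by
  have hu : 2 * u * z ^ 3 = 0 := by linear_combination e2
  have hxy : x * y * z ^ 2 = 0 := by linear_combination -e4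
  exact ⟨by simpa [h2, hz] using hu, by simpa [hz] using hxy⟩

theorem F2_partials_zero_of_z_eq_w (h2 : (2 : k) ≠ 0) {x y u w : k} (hw : w ≠ 0)
    (e0 : -(y * w ^ 2 * w) + 2 * x * w * w ^ 2 - y * w ^ 3 = 0)
    (e1 : -(x * w ^ 2 * w) + 2 * y * w * w ^ 2 - x * w ^ 3 = 0)
    (e3 : 3 * u ^ 2 * w ^ 2 - 2 * x * y * w * w + (x ^ 2 + y ^ 2 - u ^ 2) * w ^ 2 = 0) :
    y = x ∧ u = 0 := by
  have hxy : (x - y) * (2 * 2 * w ^ 3) = 0 := by linear_combination e0 - e1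
  have hxy : y = x := by
    have : x - y = 0 := by simpa [h2, hw] using hxy
    linear_combination -this
  have hu : 2 * u ^ 2 * w ^ 2 = 0 := by linear_combination e3 + (x - y) * w ^ 2 * hxy
  exact ⟨hxy, by simpa [h2, hw] using hu⟩

theorem F2_partials_zero_of_z_eq_neg_w (h2 : (2 : k) ≠ 0) {x y u w : k} (hw : w ≠ 0)
    (e0 : -(y * (-w) ^ 2 * w) + 2 * x * (-w) * w ^ 2 - y * w ^ 3 = 0)
    (e1 : -(x * (-w) ^ 2 * w) + 2 * y * (-w) * w ^ 2 - x * w ^ 3 = 0)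
    (e3 : 3 * u ^ 2 * (-w) ^ 2 - 2 * x * y * (-w) * w + (x ^ 2 + y ^ 2 - u ^ 2) * w ^ 2 = 0) :
    y = -x ∧ u = 0 := by
  have hxy : (x + y) * (2 * 2 * w ^ 3) = 0 := by linear_combination -e0 - e1
  have hxy : y = -x := by
    have : x + y = 0 := by simpa [h2, hw] using hxy
    linear_combination this
  have hu : 2 * u ^ 2 * w ^ 2 = 0 := by linear_combination e3 - (x + y) * w ^ 2 * hxy
  exact ⟨hxy, by simpa [h2, hw] using hu⟩

theorem F2_partials_zero_of_z_ne_w_of_z_ne_neg_w (h2 : (2 : k) ≠ 0) {x y u z w : k} (hw : w ≠ 0)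
    (hzw : z - w ≠ 0) (hzw' : z + w ≠ 0)
    (e0 : -(y * z ^ 2 * w) + 2 * x * z * w ^ 2 - y * w ^ 3 = 0)
    (e1 : -(x * z ^ 2 * w) + 2 * y * z * w ^ 2 - x * w ^ 3 = 0)
    (e2 : 2 * u * z ^ 3 - 2 * u * z * w ^ 2 = 0)
    (e3 : 3 * u ^ 2 * z ^ 2 - 2 * x * y * z * w + (x ^ 2 + y ^ 2 - u ^ 2) * w ^ 2 = 0) :
    x = 0 ∧ y = 0 ∧ u = 0 := by
  have hs : (x + y) * w * (z - w) ^ 2 = 0 := by linear_combination -e0 - e1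
  have hd : (x - y) * w * (z + w) ^ 2 = 0 := by linear_combination e0 - e1
  replace hs : x + y = 0 := by simpa [hw, hzw] using hs
  replace hd : x - y = 0 := by simpa [hw, hzw'] using hd
  have hx : x = 0 := by simpa [h2] using (by linear_combination hs + hd : 2 * x = 0)
  have hy : y = 0 := by linear_combination hs - hx
  subst hx hy
  refine ⟨rfl, rfl, by_contra fun hu => ?_⟩
  have hz : 2 * u * z * (z - w) * (z + w) = 0 := by linear_combination e2
  obtain rfl : z = 0 := by simpa [h2, hu, hzw, hzw'] using hz
  have : u ^ 2 * w ^ 2 = 0 := by linear_combination -e3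
  simp [hu, hw] at this

theorem F2_partials_zero_cases (h2 : (2 : k) ≠ 0) {x y u z w : k}
    (hP : ¬(x = 0 ∧ y = 0 ∧ u = 0)) (hQ : ¬(z = 0 ∧ w = 0))
    (e0 : -(y * z ^ 2 * w) + 2 * x * z * w ^ 2 - y * w ^ 3 = 0)
    (e1 : -(x * z ^ 2 * w) + 2 * y * z * w ^ 2 - x * w ^ 3 = 0)
    (e2 : 2 * u * z ^ 3 - 2 * u * z * w ^ 2 = 0)
    (e3 : 3 * u ^ 2 * z ^ 2 - 2 * x * y * z * w + (x ^ 2 + y ^ 2 - u ^ 2) * w ^ 2 = 0)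
    (e4 : -(x * y * z ^ 2) + 2 * (x ^ 2 + y ^ 2 - u ^ 2) * z * w - 3 * x * y * w ^ 2 = 0) :
    (y = 0 ∧ u = 0 ∧ w = 0) ∨ (x = 0 ∧ u = 0 ∧ w = 0) ∨
      (y = x ∧ u = 0 ∧ w = z) ∨ (y = -x ∧ u = 0 ∧ w = -z) := by
  by_cases hw : w = 0
  · subst hw
    obtain ⟨hu, hx | hy⟩ := F2_partials_zero_of_w_eq_zero h2 (fun hz => hQ ⟨hz, rfl⟩) e2 e4
    · exact Or.inr (Or.inl ⟨hx, hu, rfl⟩)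
    · exact Or.inl ⟨hy, hu, rfl⟩
  by_cases hzw : z - w = 0
  · obtain rfl : z = w := sub_eq_zero.mp hzw
    obtain ⟨hy, hu⟩ := F2_partials_zero_of_z_eq_w h2 hw e0 e1 e3
    exact Or.inr (Or.inr (Or.inl ⟨hy, hu, rfl⟩))
  by_cases hzw' : z + w = 0
  · obtain rfl : z = -w := eq_neg_of_add_eq_zero_left hzw'
    obtain ⟨hy, hu⟩ := F2_partials_zero_of_z_eq_neg_w h2 hw e0 e1 e3
    exact Or.inr (Or.inr (Or.inr ⟨hy, hu, (neg_neg w).symm⟩))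
  exact absurd (F2_partials_zero_of_z_ne_w_of_z_ne_neg_w h2 hw hzw hzw' e0 e1 e2 e3) hP

theorem IsSingularF2.exists_smul_eq_of_ne_zero (h2 : (2 : k) ≠ 0)
    {v : Fin 3 → k} {q : Fin 2 → k}
    (h : IsSingularF2 v q) (hv : v ≠ 0) (hq : q ≠ 0) :
    ((∃ a : k, a • ![1, 0, 0] = v) ∧ ∃ b : k, b • ![1, 0] = q) ∨
      ((∃ a : k, a • ![0, 1, 0] = v) ∧ ∃ b : k, b • ![1, 0] = q) ∨
      ((∃ a : k, a • ![1, 1, 0] = v) ∧ ∃ b : k, b • ![1, 1] = q) ∨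
      ((∃ a : k, a • ![1, -1, 0] = v) ∧ ∃ b : k, b • ![1, -1] = q) := by
  have hP : ¬(v 0 = 0 ∧ v 1 = 0 ∧ v 2 = 0) := fun ⟨h0, h1, h2⟩ =>
    hv (funext fun i => by fin_cases i <;> assumption)
  have hQ : ¬(q 0 = 0 ∧ q 1 = 0) := fun ⟨h0, h1⟩ =>
    hq (funext fun i => by fin_cases i <;> assumption)
  obtain ⟨-, e0, e1, e2, e3, e4⟩ := (isSingularF2_iff v q).mp h
  rcases F2_partials_zero_cases h2 hP hQ e0 e1 e2 e3 e4 with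
    ⟨hy, hu, hw⟩ | ⟨hx, hu, hw⟩ | ⟨hy, hu, hw⟩ | ⟨hy, hu, hw⟩
  · refine Or.inl ⟨⟨v 0, ?_⟩, q 0, ?_⟩ <;> ext i <;> fin_cases i <;> simp [hy, hu, hw]
  · refine Or.inr (Or.inl ⟨⟨v 1, ?_⟩, q 0, ?_⟩) <;> ext i <;> fin_cases i <;>
      simp [hx, hu, hw]
  · refine Or.inr (Or.inr (Or.inl ⟨⟨v 0, ?_⟩, q 0, ?_⟩)) <;> ext i <;> fin_cases i <;>
      simp [hy, hu, hw]
  · refine Or.inr (Or.inr (Or.inr ⟨⟨v 0, ?_⟩, q 0, ?_⟩)) <;> ext i <;> fin_cases i <;>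
      simp [hy, hu, hw]

end Classification

theorem stmt_12_general (k : Type) [Field k] (hchar : ringChar k ≠ 2) :
    {PQ : Projectivization k (Fin 3 → k) × Projectivization k (Fin 2 → k) |
        eval ![PQ.1.rep 0, PQ.1.rep 1, PQ.1.rep 2, PQ.2.rep 0, PQ.2.rep 1]
            (F2poly k) = 0 ∧
        ∀ i : Fin 5,
          eval ![PQ.1.rep 0, PQ.1.rep 1, PQ.1.rep 2, PQ.2.rep 0, PQ.2.rep 1]
            (MvPolynomial.pderiv i (F2poly k)) = 0} =
      {(Projectivization.mk k ![1, 0, 0] (fun h => one_ne_zero (congrFun h 0)),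
        Projectivization.mk k ![1, 0] (fun h => one_ne_zero (congrFun h 0))),
       (Projectivization.mk k ![0, 1, 0] (fun h => one_ne_zero (congrFun h 1)),
        Projectivization.mk k ![1, 0] (fun h => one_ne_zero (congrFun h 0))),
       (Projectivization.mk k ![1, 1, 0] (fun h => one_ne_zero (congrFun h 0)),
        Projectivization.mk k ![1, 1] (fun h => one_ne_zero (congrFun h 0))),
       (Projectivization.mk k ![1, -1, 0] (fun h => one_ne_zero (congrFun h 0)),
        Projectivization.mk k ![1, -1] (fun h => one_ne_zero (congrFun h 0)))} := by
  ext ⟨P, Q⟩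
  induction P with | h v hv => ?_
  induction Q with | h q hq => ?_
  change IsSingularF2 _ _ ↔ _
  simp only [isSingularF2_rep_mk_iff, Set.mem_insert_iff, Set.mem_singleton_iff, Prod.mk.injEq,
    Projectivization.mk_eq_mk_iff']
  refine ⟨fun h => h.exists_smul_eq_of_ne_zero (Ring.two_ne_zero hchar) hv hq, ?_⟩
  rintro (⟨⟨a, rfl⟩, b, rfl⟩ | ⟨⟨a, rfl⟩, b, rfl⟩ | ⟨⟨a, rfl⟩, b, rfl⟩ | ⟨⟨a, rfl⟩, b, rfl⟩)
    <;> refine IsSingularF2.smul ?_ a b <;> simp [isSingularF2_iff] <;> norm_num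

theorem stmt_12 (k : Type) [Field k] [IsAlgClosed k] (hchar : ringChar k ≠ 2) :
    {PQ : Projectivization k (Fin 3 → k) × Projectivization k (Fin 2 → k) |
        eval ![PQ.1.rep 0, PQ.1.rep 1, PQ.1.rep 2, PQ.2.rep 0, PQ.2.rep 1]
            (F2poly k) = 0 ∧
        ∀ i : Fin 5,
          eval ![PQ.1.rep 0, PQ.1.rep 1, PQ.1.rep 2, PQ.2.rep 0, PQ.2.rep 1]
            (MvPolynomial.pderiv i (F2poly k)) = 0} =
      {(Projectivization.mk k ![1, 0, 0] (fun h => one_ne_zero (congrFun h 0)),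
        Projectivization.mk k ![1, 0] (fun h => one_ne_zero (congrFun h 0))),
       (Projectivization.mk k ![0, 1, 0] (fun h => one_ne_zero (congrFun h 1)),
        Projectivization.mk k ![1, 0] (fun h => one_ne_zero (congrFun h 0))),
       (Projectivization.mk k ![1, 1, 0] (fun h => one_ne_zero (congrFun h 0)),
        Projectivization.mk k ![1, 1] (fun h => one_ne_zero (congrFun h 0))),
       (Projectivization.mk k ![1, -1, 0] (fun h => one_ne_zero (congrFun h 0)),
        Projectivization.mk k ![1, -1] (fun h => one_ne_zero (congrFun h 0)))} :=
  stmt_12_general k hchar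
end

section
/- Let q = 2^n. The number of points (x:y:u, z:w) in (P^2 × P^1)(F_q) on the surface defined by u^2 z^3 + x y z^2 w + (x^2+y^2) z w^2 + x y w^3 = 0 (the reduction mod 2 of F_0) equals q^2 + 3q + 1. -/
open Projectivization

namespace Stmt18Aux

lemma cardNe {α : Type*} [Finite α] (a : α) :
    Nat.card {x : α // x ≠ a} + 1 = Nat.card α := by
  classical
  have h := Nat.card_congr (Equiv.sumCompl (fun x : α => x = a))
  rw [Nat.card_sum] at h
  have h1 : Nat.card {x : α // x = a} = 1 := by
    rw [Nat.card_eq_one_iff_unique]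
    exact ⟨⟨fun x y => Subtype.ext (x.2.trans y.2.symm)⟩, ⟨⟨a, rfl⟩⟩⟩
  have e : Nat.card {x : α // ¬ x = a} = Nat.card {x : α // x ≠ a} := rfl
  omega


variable {F : Type} [Field F]

def Efun (v : Fin 3 → F) (w : Fin 2 → F) : F :=
  v 2 ^ 2 * w 0 ^ 3 + v 0 * v 1 * w 0 ^ 2 * w 1
    + (v 0 ^ 2 + v 1 ^ 2) * w 0 * w 1 ^ 2 + v 0 * v 1 * w 1 ^ 3

lemma Escale (a b : F) (v : Fin 3 → F) (w : Fin 2 → F) :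
    Efun (a • v) (b • w) = a ^ 2 * b ^ 3 * Efun v w := by
  simp only [Efun, Pi.smul_apply, smul_eq_mul]
  ring

variable (F) in
abbrev Tt := {PQ : Projectivization F (Fin 3 → F) × Projectivization F (Fin 2 → F) //
    Efun PQ.1.rep PQ.2.rep = 0}

variable (F) in
abbrev Ss := {p : (Fin 3 → F) × (Fin 2 → F) //
    p.1 ≠ 0 ∧ p.2 ≠ 0 ∧ Efun p.1 p.2 = 0}

lemma mk_smul_eq {V : Type} [AddCommGroup V] [Module F V] (a : Fˣ) (v : V) (hv : v ≠ 0) :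
    mk F ((a : F) • v) (smul_ne_zero a.ne_zero hv) = mk F v hv :=
  (mk_eq_mk_iff F _ _ _ hv).mpr ⟨a, (Units.smul_def a v).symm⟩

lemma smul_cancel {ι : Type} {a a' : F} {v : ι → F} (hv : v ≠ 0)
    (h : a • v = a' • v) : a = a' := by
  obtain ⟨i, hi⟩ := Function.ne_iff.mp hv
  have := congrFun h i
  simp only [Pi.smul_apply, smul_eq_mul] at this
  exact mul_right_cancel₀ hi this

noncomputable def equivA : Tt F × (Fˣ × Fˣ) ≃ Ss F := by
  refine Equiv.ofBijective (fun x => ⟨((x.2.1 : F) • x.1.1.1.rep, (x.2.2 : F) • x.1.1.2.rep),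
    smul_ne_zero x.2.1.ne_zero (rep_nonzero _), smul_ne_zero x.2.2.ne_zero (rep_nonzero _),
    by rw [Escale, x.1.2, mul_zero]⟩) ⟨?_, ?_⟩
  · rintro ⟨⟨⟨P, Q⟩, hPQ⟩, a, b⟩ ⟨⟨⟨P', Q'⟩, hPQ'⟩, a', b'⟩ h
    simp only [Subtype.mk.injEq, Prod.mk.injEq] at h
    obtain ⟨h1, h2⟩ := h
    have hP : P = P' := by
      have e1 := mk_smul_eq a P.rep (rep_nonzero P)
      have e2 := mk_smul_eq a' P'.rep (rep_nonzero P')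
      rw [mk_rep] at e1 e2
      rw [← e1, ← e2]
      exact (mk_eq_mk_iff F _ _ _ _).mpr ⟨1, by simp [h1]⟩
    have hQ : Q = Q' := by
      have e1 := mk_smul_eq b Q.rep (rep_nonzero Q)
      have e2 := mk_smul_eq b' Q'.rep (rep_nonzero Q')
      rw [mk_rep] at e1 e2
      rw [← e1, ← e2]
      exact (mk_eq_mk_iff F _ _ _ _).mpr ⟨1, by simp [h2]⟩
    subst hP; subst hQ
    have ha : a = a' := Units.ext (smul_cancel (rep_nonzero P) h1)
    have hb : b = b' := Units.ext (smul_cancel (rep_nonzero Q) h2)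
    simp [ha, hb]
  · rintro ⟨⟨v, w⟩, hv, hw, hE⟩
    set P := mk F v hv with hPdef
    set Q := mk F w hw with hQdef
    obtain ⟨c, hc⟩ := exists_smul_eq_mk_rep F v hv
    obtain ⟨d, hd⟩ := exists_smul_eq_mk_rep F w hw
    have hT : Efun P.rep Q.rep = 0 := by
      rw [← hc, ← hd, Units.smul_def, Units.smul_def, Escale, hE, mul_zero]
    refine ⟨⟨⟨(P, Q), hT⟩, c⁻¹, d⁻¹⟩, ?_⟩
    apply Subtype.ext
    simp only [Prod.mk.injEq]
    constructor
    · rw [← hc, Units.smul_def, smul_smul]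
      simp
    · rw [← hd, Units.smul_def, smul_smul]
      simp


lemma sqInj (h2 : (2:F) = 0) {u u' : F} (h : u ^ 2 = u' ^ 2) : u = u' := by
  have key : (u - u') ^ 2 = (u ^ 2 - u' ^ 2) + 2 * (u' * u' - u * u') := by ring
  rw [h, sub_self, h2, zero_mul, add_zero] at key
  exact sub_eq_zero.mp (pow_eq_zero_iff (n := 2) (by norm_num) |>.mp key)

lemma sqSurj [Fintype F] (h2 : (2:F) = 0) (c : F) : ∃ u : F, u ^ 2 = c :=
  (Finite.injective_iff_surjective.mp (fun _ _ h => sqInj h2 h)) c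

lemma cardS1 [Fintype F] (h2 : (2:F) = 0) :
    Nat.card {p : Ss F // p.1.2 0 ≠ 0} =
      Nat.card (({z : F // z ≠ 0} × F) × {xy : F × F // xy ≠ 0}) := by
  apply Nat.card_congr
  refine Equiv.ofBijective
    (fun p => ((⟨p.1.1.2 0, p.2⟩, p.1.1.2 1), ⟨(p.1.1.1 0, p.1.1.1 1), ?_⟩)) ⟨?_, ?_⟩
  · -- (v0, v1) ≠ 0
    intro h
    rw [Prod.mk_eq_zero] at h
    obtain ⟨h0, h1⟩ := h
    have hE := p.1.2.2.2
    simp only [Efun] at hE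
    set v := p.1.1.1 with hvdef
    set w := p.1.1.2 with hwdef
    have hc : v 2 ^ 2 * w 0 ^ 3 = 0 := by
      linear_combination hE - (v 1 * w 0 ^ 2 * w 1 + v 0 * w 0 * w 1 ^ 2
        + v 1 * w 1 ^ 3) * h0 - (v 1 * w 0 * w 1 ^ 2) * h1
    rcases mul_eq_zero.mp hc with hc' | hc'
    · apply p.1.2.1
      funext i
      fin_cases i
      · exact h0
      · exact h1
      · exact pow_eq_zero_iff (n := 2) (by norm_num) |>.mp hc'
    · exact p.2 (pow_eq_zero_iff (n := 3) (by norm_num) |>.mp hc')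
  · rintro ⟨⟨⟨v, w⟩, hv, hw, hE⟩, hz⟩ ⟨⟨⟨v', w'⟩, hv', hw', hE'⟩, hz'⟩ h
    simp only [Prod.mk.injEq, Subtype.mk.injEq] at h
    obtain ⟨⟨h0, h1⟩, h2', h3⟩ := h
    simp only at h0 h1 h2' h3 hz
    have hweq : w = w' := by funext i; fin_cases i; exacts [h0, h1]
    simp only [Efun] at hE hE'
    have h22 : v 2 ^ 2 * w 0 ^ 3 = v' 2 ^ 2 * w 0 ^ 3 := by
      rw [← hweq] at hE'
      rw [← h2', ← h3] at hE'
      linear_combination hE - hE'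
    have hu : v 2 = v' 2 :=
      sqInj h2 (mul_right_cancel₀ (pow_ne_zero 3 hz) h22)
    apply Subtype.ext
    apply Subtype.ext
    simp only [Prod.mk.injEq]
    constructor
    · funext i; fin_cases i; exacts [h2', h3, hu]
    · exact hweq
  · rintro ⟨⟨⟨z, hz⟩, w1⟩, ⟨⟨x, y⟩, hxy⟩⟩
    obtain ⟨u, hu⟩ := sqSurj h2
      ((x * y * z ^ 2 * w1 + (x ^ 2 + y ^ 2) * z * w1 ^ 2 + x * y * w1 ^ 3) * (z ^ 3)⁻¹)
    have hz3 : z ^ 3 ≠ 0 := pow_ne_zero _ hz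
    have key : u ^ 2 * z ^ 3
        = x * y * z ^ 2 * w1 + (x ^ 2 + y ^ 2) * z * w1 ^ 2 + x * y * w1 ^ 3 := by
      rw [hu]; field_simp
    have hE : Efun ![x, y, u] ![z, w1] = 0 := by
      simp only [Efun, Matrix.cons_val_zero, Matrix.cons_val_one, Matrix.head_cons,
        Matrix.cons_val_two, Matrix.tail_cons]
      linear_combination key + (x * y * z ^ 2 * w1 + (x ^ 2 + y ^ 2) * z * w1 ^ 2
        + x * y * w1 ^ 3) * h2
    have hvne : (![x, y, u] : Fin 3 → F) ≠ 0 := by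
      intro hv0
      apply hxy
      rw [Prod.mk_eq_zero]
      exact ⟨congrFun hv0 0, congrFun hv0 1⟩
    have hwne : (![z, w1] : Fin 2 → F) ≠ 0 := fun hw0 => hz (congrFun hw0 0)
    exact ⟨⟨⟨(![x, y, u], ![z, w1]), hvne, hwne, hE⟩, hz⟩, rfl⟩

lemma cardS2 :
    Nat.card {p : Ss F // ¬ p.1.2 0 ≠ 0} =
      Nat.card ({w1 : F // w1 ≠ 0} ×
        {t : {xy : F × F // xy.1 * xy.2 = 0} × F //
          t ≠ (⟨(0, 0), by norm_num⟩, 0)}) := by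
  apply Nat.card_congr
  refine Equiv.ofBijective (fun p => (⟨p.1.1.2 1, ?_⟩,
    ⟨(⟨(p.1.1.1 0, p.1.1.1 1), ?_⟩, p.1.1.1 2), ?_⟩)) ⟨?_, ?_⟩
  · -- w1 ≠ 0
    intro h1
    apply p.1.2.2.1
    funext i
    fin_cases i
    · exact not_not.mp p.2
    · exact h1
  · -- v0 * v1 = 0
    have hE := p.1.2.2.2
    have hw0 : p.1.1.2 0 = 0 := not_not.mp p.2
    simp only [Efun, hw0, mul_zero, zero_mul, add_zero, zero_add, zero_pow,
      ne_eq, OfNat.ofNat_ne_zero, not_false_iff] at hE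
    have hw1 : p.1.1.2 1 ≠ 0 := by
      intro h1
      apply p.1.2.2.1
      funext i
      fin_cases i
      · exact hw0
      · exact h1
    rcases mul_eq_zero.mp hE with hc | hc
    · exact hc
    · exact absurd (pow_eq_zero_iff (n := 3) (by norm_num) |>.mp hc) hw1
  · -- ≠ t0
    intro h
    simp only [Prod.mk.injEq, Subtype.mk.injEq] at h
    apply p.1.2.1
    funext i
    fin_cases i
    · exact h.1.1
    · exact h.1.2
    · exact h.2
  · rintro ⟨⟨⟨v, w⟩, hv, hw, hE⟩, hz⟩ ⟨⟨⟨v', w'⟩, hv', hw', hE'⟩, hz'⟩ h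
    simp only [Prod.mk.injEq, Subtype.mk.injEq] at h
    obtain ⟨h1, ⟨h2', h3⟩, h4⟩ := h
    simp only at h1 h2' h3 h4 hz hz'
    apply Subtype.ext
    apply Subtype.ext
    simp only [Prod.mk.injEq]
    constructor
    · funext i; fin_cases i; exacts [h2', h3, h4]
    · funext i
      fin_cases i
      · exact (not_not.mp hz).trans (not_not.mp hz').symm
      · exact h1
  · rintro ⟨⟨w1, hw1⟩, ⟨⟨⟨⟨x, y⟩, hxy⟩, u⟩, hne⟩⟩
    have hE : Efun ![x, y, u] ![0, w1] = 0 := by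
      simp only [Efun, Matrix.cons_val_zero, Matrix.cons_val_one, Matrix.head_cons,
        Matrix.cons_val_two, Matrix.tail_cons]
      simp only at hxy
      rw [hxy]
      ring
    have hvne : (![x, y, u] : Fin 3 → F) ≠ 0 := by
      intro hv0
      apply hne
      have hx : x = 0 := congrFun hv0 0
      have hy : y = 0 := congrFun hv0 1
      have hu : u = 0 := congrFun hv0 2
      subst hx; subst hy; subst hu
      rfl
    have hwne : (![0, w1] : Fin 2 → F) ≠ 0 := fun hw0 => hw1 (congrFun hw0 1)
    exact ⟨⟨⟨(![x, y, u], ![0, w1]), hvne, hwne, hE⟩, by simp⟩, rfl⟩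

lemma cardXY [Fintype F] :
    Nat.card {xy : F × F // xy.1 * xy.2 = 0} =
      Nat.card (F ⊕ {x : F // x ≠ 0}) := by
  symm
  apply Nat.card_congr
  refine Equiv.ofBijective (fun s => Sum.elim (fun y => ⟨(0, y), zero_mul y⟩)
    (fun x => ⟨(x.1, 0), mul_zero x.1⟩) s) ⟨?_, ?_⟩
  · rintro (y | ⟨x, hx⟩) (y' | ⟨x', hx'⟩) h <;>
      simp only [Sum.elim_inl, Sum.elim_inr, Subtype.mk.injEq, Prod.mk.injEq] at h
    · rw [h.2]
    · exact absurd h.1.symm hx'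
    · exact absurd h.1 hx
    · simp only [Sum.inr.injEq, Subtype.mk.injEq]
      exact h.1
  · rintro ⟨⟨x, y⟩, hxy⟩
    by_cases hx : x = 0
    · exact ⟨Sum.inl y, by simp [hx]⟩
    · refine ⟨Sum.inr ⟨x, hx⟩, ?_⟩
      have hy : y = 0 := by
        rcases mul_eq_zero.mp hxy with h | h
        · exact absurd h hx
        · exact h
      simp [hy]

end Stmt18Aux

theorem stmt_18 (n : ℕ) (hn : 0 < n)
    (F : Type) [Field F] [Fintype F] (hF : Fintype.card F = 2 ^ n) :
    Nat.card {PQ : Projectivization F (Fin 3 → F) × Projectivization F (Fin 2 → F) //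
      PQ.1.rep 2 ^ 2 * PQ.2.rep 0 ^ 3
        + PQ.1.rep 0 * PQ.1.rep 1 * PQ.2.rep 0 ^ 2 * PQ.2.rep 1
        + (PQ.1.rep 0 ^ 2 + PQ.1.rep 1 ^ 2) * PQ.2.rep 0 * PQ.2.rep 1 ^ 2
        + PQ.1.rep 0 * PQ.1.rep 1 * PQ.2.rep 1 ^ 3 = 0} =
      (2 ^ n) ^ 2 + 3 * 2 ^ n + 1 := by
  classical
  open Stmt18Aux in
  show Nat.card (Stmt18Aux.Tt F) = (2 ^ n) ^ 2 + 3 * 2 ^ n + 1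
  have h2 : (2 : F) = 0 := by
    have hc : ((Fintype.card F : ℕ) : F) = 0 := FiniteField.cast_card_eq_zero F
    rw [hF] at hc
    push_cast at hc
    exact pow_eq_zero_iff hn.ne' |>.mp hc
  obtain ⟨m, hm⟩ : ∃ m, Fintype.card F = m + 2 := by
    refine ⟨2 ^ n - 2, ?_⟩
    have : 2 ≤ 2 ^ n := Nat.one_lt_two_pow hn.ne'
    omega
  have e1 : Nat.card {z : F // z ≠ 0} = m + 1 := by
    have h := Stmt18Aux.cardNe (0 : F)
    simp only [Nat.card_eq_fintype_card] at h ⊢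
    omega
  have e2 : Nat.card {xy : F × F // xy ≠ 0} = m * m + 4 * m + 3 := by
    have h := Stmt18Aux.cardNe (0 : F × F)
    rw [Nat.card_prod] at h
    simp only [Nat.card_eq_fintype_card] at h ⊢
    rw [hm] at h
    have hr : (m + 2) * (m + 2) = (m * m + 4 * m + 3) + 1 := by ring
    rw [hr] at h
    exact Nat.add_right_cancel h
  have e3 : Nat.card {xy : F × F // xy.1 * xy.2 = 0} = 2 * m + 3 := by
    rw [Stmt18Aux.cardXY, Nat.card_sum, e1]
    simp only [Nat.card_eq_fintype_card]
    omega
  have e4 : Nat.card {t : {xy : F × F // xy.1 * xy.2 = 0} × F //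
      t ≠ (⟨(0, 0), by norm_num⟩, 0)} = 2 * (m * m) + 7 * m + 5 := by
    have h := Stmt18Aux.cardNe ((⟨(0, 0), by norm_num⟩, 0) :
      {xy : F × F // xy.1 * xy.2 = 0} × F)
    rw [Nat.card_prod, e3] at h
    simp only [Nat.card_eq_fintype_card] at h ⊢
    rw [hm] at h
    have hr : (2 * m + 3) * (m + 2) = (2 * (m * m) + 7 * m + 5) + 1 := by ring
    rw [hr] at h
    exact Nat.add_right_cancel h
  have e5 : Nat.card Fˣ = m + 1 := by
    have h := Nat.card_units (α := F)
    simp only [Nat.card_eq_fintype_card] at h ⊢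
    omega
  have hA := (Nat.card_congr (Stmt18Aux.equivA (F := F))).symm
  rw [Nat.card_prod, Nat.card_prod, e5] at hA
  have hsplit := Nat.card_congr (Equiv.sumCompl (fun p : Stmt18Aux.Ss F => p.1.2 0 ≠ 0))
  rw [Nat.card_sum, Stmt18Aux.cardS1 h2, Stmt18Aux.cardS2] at hsplit
  rw [Nat.card_prod, Nat.card_prod, e1, e2, Nat.card_eq_fintype_card (α := F), hm,
    Nat.card_prod, e1, e4] at hsplit
  have key : Nat.card (Stmt18Aux.Tt F) * ((m + 1) * (m + 1))
      = (m * m + 7 * m + 11) * ((m + 1) * (m + 1)) := by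
    rw [← hA, ← hsplit]
    ring
  have hcT : Nat.card (Stmt18Aux.Tt F) = m * m + 7 * m + 11 :=
    Nat.eq_of_mul_eq_mul_right (by positivity) key
  rw [hcT, ← hF, hm]
  ring
end

section
/- Let p be an odd prime with (5/p) = 1 and q = p^n. The number of points (x:y:u, z:w) in (P^2 × P^1)(F_q) on the surface defined by u^2 z^4 - x y z^3 w + (x^2+y^2-3u^2) z^2 w^2 - x y z w^3 + u^2 w^4 = 0 equals q^2 + 8q + 1. -/
/-!
Projecting to `(z : w) ∈ ℙ¹` makes the surface a conic bundle. Writing a point of `ℙ²` as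
`(x : y : t)`, the fibre over `(z : w)` is `(z⁴ - 3z²w² + w⁴) t² + zw (zx - wy)(wx - zy) = 0`,
and a linear change of coordinates brings it to `c T² + d X Y = 0` with `(c, d) ≠ 0`. Such a cone
has `q²` affine points if `c ≠ 0` and `2q² - q` if `c = 0`, so every fibre has `q + 1` projective
points, except those over the zeros of `(z² - w²)(z⁴ - 3z²w² + w⁴)`, which are pairs of lines with
`2q + 1` points. As `5` is a nonzero square, these zeros are the six distinct points
`z/w ∈ {±1, ±φ, ±(1 - φ)}` with `φ² = φ + 1`, and the total is `(q + 1)² + 6q = q² + 8q + 1`.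
-/

open scoped LinearAlgebra.Projectivization Matrix

section Counting

variable {α β : Type*} [Fintype α] [Fintype β]

theorem sum_eq_add_card_sub_one_mul (a : α) (f : α → ℕ) {m : ℕ}
    (h : ∀ x, x ≠ a → f x = m) : ∑ x, f x = f a + (Nat.card α - 1) * m := by
  classical
  rw [Fintype.sum_eq_add_sum_compl a, Finset.sum_const_nat fun x hx => h x (by simpa using hx),
    Finset.card_compl, Finset.card_singleton, Nat.card_eq_fintype_card]

theorem card_subtype_prod_eq_sum_fst (P : α → β → Prop) :
    Nat.card {x : α × β // P x.1 x.2} = ∑ a, Nat.card {b // P a b} := by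
  classical
  simp only [Nat.card_eq_fintype_card, Fintype.card_subtype, Finset.card_filter,
    Fintype.sum_prod_type]

theorem card_subtype_prod_eq_sum_snd (P : α → β → Prop) :
    Nat.card {x : α × β // P x.1 x.2} = ∑ b, Nat.card {a // P a b} := by
  classical
  simp only [Nat.card_eq_fintype_card, Fintype.card_subtype, Finset.card_filter,
    Fintype.sum_prod_type_right]

end Counting

theorem Projectivization.card_subtype_of_smul_iff {K V : Type*} [DivisionRing K]
    [AddCommGroup V] [Module K V] [Finite V] {R : V → Prop} (h0 : R 0)
    (hR : ∀ (c : Kˣ) (v : V), R (c • v) ↔ R v) :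
    Nat.card {v : V // R v} = Nat.card {P : ℙ K V // R P.rep} * (Nat.card K - 1) + 1 := by
  have hrep (v : {v : V // v ≠ 0}) : R v ↔ R (mk K v.1 v.2).rep := by
    obtain ⟨c, hc⟩ := exists_smul_eq_mk_rep K v.1 v.2
    rw [← hc, hR]
  have hnonzero : Nat.card {v : V // v ≠ 0 ∧ R v} =
      Nat.card {P : ℙ K V // R P.rep} * (Nat.card K - 1) := by
    rw [← Nat.card_units, ← Nat.card_prod]
    exact Nat.card_congr <| (Equiv.subtypeSubtypeEquivSubtypeInter (· ≠ 0) R).symm.trans <|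
      ((nonZeroEquivProjectivizationProdUnits K V).subtypeEquiv hrep).trans
        Equiv.prodSubtypeFstEquivSubtypeProd
  have hzero := Set.ncard_sdiff_singleton_add_one (show (0 : V) ∈ {v | R v} from h0)
    (Set.toFinite _)
  rw [← Nat.card_coe_set_eq, ← Nat.card_coe_set_eq] at hzero
  rw [← hnonzero]
  exact hzero.symm.trans <| congrArg (· + 1) <|
    Nat.card_congr (Equiv.subtypeEquivRight fun v => by simp [and_comm])

theorem Matrix.card_subtype_mulVec {ι K : Type*} [Fintype ι] [DecidableEq ι] [Field K] [Finite K]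
    {A : Matrix ι ι K} (hA : A.det ≠ 0) (P : (ι → K) → Prop) :
    Nat.card {v // P (A *ᵥ v)} = Nat.card {v // P v} :=
  Nat.card_congr <| Equiv.subtypeEquiv
    (Equiv.ofBijective _ <| Finite.injective_iff_bijective.mp <|
      mulVec_injective_iff_isUnit.mpr <| (isUnit_iff_isUnit_det A).mpr hA.isUnit)
    fun _ => Iff.rfl

section FiniteField

variable {F : Type*} [Field F] [Fintype F] [DecidableEq F]

theorem card_mul_eq (e : F) :
    Nat.card {x : F × F // x.1 * x.2 = e} =
      if e = 0 then 2 * Nat.card F - 1 else Nat.card F - 1 := by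
  rw [card_subtype_prod_eq_sum_fst fun a b : F => a * b = e,
    sum_eq_add_card_sub_one_mul 0 _ (m := 1) fun x hx => ?_]
  · have hq : 0 < Nat.card F := Nat.card_pos
    simp only [zero_mul, mul_one]
    split_ifs with he
    · rw [Nat.card_congr (Equiv.subtypeUnivEquiv fun _ => he.symm)]
      omega
    · simp [Ne.symm he]
  · rw [Nat.card_congr (Equiv.subtypeEquivRight (q := (· = e / x)) fun y => by
      rw [eq_div_iff hx, mul_comm]), Nat.card_unique]

theorem card_quadric_cone (c d : F) (hcd : c ≠ 0 ∨ d ≠ 0) :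
    Nat.card {v : Fin 3 → F // c * v 0 ^ 2 + d * (v 1 * v 2) = 0} =
      if c = 0 then 2 * Nat.card F ^ 2 - Nat.card F else Nat.card F ^ 2 := by
  let e : F × F × F ≃ (Fin 3 → F) :=
    ((Equiv.refl F).prodCongr (finTwoArrowEquiv F).symm).trans (Fin.consEquiv fun _ => F)
  rw [← Nat.card_congr (e.subtypeEquiv (p := fun x => c * x.1 ^ 2 + d * (x.2.1 * x.2.2) = 0)
      fun _ => Iff.rfl),
    card_subtype_prod_eq_sum_fst fun t (x : F × F) => c * t ^ 2 + d * (x.1 * x.2) = 0]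
  obtain ⟨k, hk⟩ : ∃ k, Nat.card F = k + 1 := Nat.exists_eq_add_one.mpr Nat.card_pos
  by_cases hd : d = 0
  · have hc : c ≠ 0 := hcd.resolve_right (not_not.mpr hd)
    rw [sum_eq_add_card_sub_one_mul 0 _ (m := 0) fun t ht => by simp [hd, hc, ht]]
    simp [hd, hc, sq]
  have hfiber (t : F) : Nat.card {x : F × F // c * t ^ 2 + d * (x.1 * x.2) = 0} =
      if c * t ^ 2 = 0 then 2 * Nat.card F - 1 else Nat.card F - 1 := by
    have hiff (x : F × F) : c * t ^ 2 + d * (x.1 * x.2) = 0 ↔ x.1 * x.2 = -(c * t ^ 2) / d := by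
      rw [eq_div_iff hd]
      constructor <;> intro h <;> linear_combination h
    rw [Nat.card_congr (Equiv.subtypeEquivRight hiff), card_mul_eq]
    simp [hd]
  simp_rw [hfiber]
  by_cases hc : c = 0
  · simp only [hc, zero_mul, if_true, Finset.sum_const, Finset.card_univ, smul_eq_mul,
      ← Nat.card_eq_fintype_card, hk]
    rw [show 2 * (k + 1) - 1 = 2 * k + 1 by omega]
    exact (Nat.sub_eq_of_eq_add (by ring)).symm
  · rw [sum_eq_add_card_sub_one_mul 0 _ (m := Nat.card F - 1) fun t ht => by simp [hc, ht]]
    simp only [hc, hk, zero_pow two_ne_zero, mul_zero, if_true, if_false, add_tsub_cancel_right]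
    rw [show 2 * (k + 1) - 1 = 2 * k + 1 by omega]
    ring

theorem card_quadric_cone_of_mulVec {f : (Fin 3 → F) → F} (A : Matrix (Fin 3) (Fin 3) F)
    (hA : A.det ≠ 0) (c d : F) (hcd : c ≠ 0 ∨ d ≠ 0)
    (hf : ∀ v, f v = c * (A *ᵥ v) 0 ^ 2 + d * ((A *ᵥ v) 1 * (A *ᵥ v) 2)) :
    Nat.card {v // f v = 0} =
      if c = 0 then 2 * Nat.card F ^ 2 - Nat.card F else Nat.card F ^ 2 := by
  simp_rw [hf]
  rw [Matrix.card_subtype_mulVec hA fun v => c * v 0 ^ 2 + d * (v 1 * v 2) = 0,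
    card_quadric_cone c d hcd]

end FiniteField

section Surface

variable {F : Type*} [Field F]

def surfaceForm (v : Fin 3 → F) (u : Fin 2 → F) : F :=
  v 2 ^ 2 * u 0 ^ 4 - v 0 * v 1 * u 0 ^ 3 * u 1
    + (v 0 ^ 2 + v 1 ^ 2 - 3 * v 2 ^ 2) * u 0 ^ 2 * u 1 ^ 2
    - v 0 * v 1 * u 0 * u 1 ^ 3 + v 2 ^ 2 * u 1 ^ 4

/-- Vanishes exactly at the points of `ℙ¹` whose fibre splits into two distinct lines. -/
def splitFiberForm (u : Fin 2 → F) : F :=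
  (u 0 ^ 2 - u 1 ^ 2) * (u 0 ^ 4 - 3 * u 0 ^ 2 * u 1 ^ 2 + u 1 ^ 4)

theorem surfaceForm_eq (v : Fin 3 → F) (u : Fin 2 → F) :
    surfaceForm v u = (u 0 ^ 4 - 3 * u 0 ^ 2 * u 1 ^ 2 + u 1 ^ 4) * v 2 ^ 2
      + u 0 * u 1 * ((u 0 * v 0 - u 1 * v 1) * (u 1 * v 0 - u 0 * v 1)) := by
  unfold surfaceForm; ring

theorem surfaceForm_smul (c : F) (v : Fin 3 → F) (u : Fin 2 → F) :
    surfaceForm (c • v) u = c ^ 2 * surfaceForm v u := by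
  simp only [surfaceForm, Pi.smul_apply, smul_eq_mul]; ring

theorem splitFiberForm_smul (c : F) (u : Fin 2 → F) :
    splitFiberForm (c • u) = c ^ 6 * splitFiberForm u := by
  simp only [splitFiberForm, Pi.smul_apply, smul_eq_mul]; ring

theorem splitFiberForm_eq_prod {φ : F} (hφ : φ ^ 2 = φ + 1) (r : F) :
    splitFiberForm ![r, 1] =
      (r - 1) * (r + 1) * (r - φ) * (r + φ) * (r - (1 - φ)) * (r + (1 - φ)) := by
  simp only [splitFiberForm, Matrix.cons_val_zero, Matrix.cons_val_one]
  linear_combination (r ^ 2 - 1) * (2 * r ^ 2 - φ ^ 2 + φ - 1) * hφ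

theorem card_splitFiberForm_one_eq_zero [DecidableEq F] {φ : F} (hφ : φ ^ 2 = φ + 1)
    (h2 : (2 : F) ≠ 0) (h5 : (5 : F) ≠ 0) :
    Nat.card {r : F // splitFiberForm ![r, 1] = 0} = 6 := by
  have hroots (r : F) : splitFiberForm ![r, 1] = 0 ↔
      r ∈ ({1, -1, φ, -φ, 1 - φ, φ - 1} : Finset F) := by
    simp [splitFiberForm_eq_prod hφ, sub_eq_zero, add_eq_zero_iff_eq_neg, or_assoc]
  rw [Nat.card_congr (Equiv.subtypeEquivRight hroots), Nat.card_eq_fintype_card, Fintype.card_coe,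
    Finset.card_insert_of_notMem, Finset.card_insert_of_notMem, Finset.card_insert_of_notMem,
    Finset.card_insert_of_notMem, Finset.card_pair]
  -- the six roots are distinct because `2 ≠ 0` and `(2φ - 1)² = 5 ≠ 0`
  all_goals try simp only [Finset.mem_insert, Finset.mem_singleton, not_or]
  all_goals grind

end Surface

section SurfaceCount

variable {F : Type*} [Field F] [Fintype F] [DecidableEq F]

theorem card_surfaceForm_eq_zero (h2 : (2 : F) ≠ 0) {u : Fin 2 → F} (hu : u ≠ 0) :
    Nat.card {v // surfaceForm v u = 0} =
      if splitFiberForm u = 0 then 2 * Nat.card F ^ 2 - Nat.card F else Nat.card F ^ 2 := by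
  have hzw : u 0 ≠ 0 ∨ u 1 ≠ 0 := by
    by_contra! h
    exact hu (funext fun i => by fin_cases i <;> simp [h.1, h.2])
  by_cases hsq : u 0 ^ 2 = u 1 ^ 2
  · have hz : u 0 ≠ 0 := fun hz =>
      hzw.elim (· hz) fun hw => hw (pow_eq_zero_iff two_ne_zero |>.mp (by rw [← hsq, hz]; ring))
    rw [if_pos (by simp [splitFiberForm, hsq])]
    -- here `surfaceForm v u = z² (zx - wy - zt) (zx - wy + zt)`
    refine (card_quadric_cone_of_mulVec !![0, 1, 0; u 0, -u 1, -u 0; u 0, -u 1, u 0] ?_ 0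
      (u 0 ^ 2) (Or.inr (pow_ne_zero 2 hz)) fun v => ?_).trans (if_pos rfl)
    · rw [show Matrix.det _ = -(2 * u 0 ^ 2) by simp [Matrix.det_fin_three]; ring]
      exact neg_ne_zero.mpr (mul_ne_zero h2 (pow_ne_zero 2 hz))
    · simp only [surfaceForm_eq, Matrix.mulVec, dotProduct, Fin.sum_univ_three, Matrix.of_apply,
        Matrix.cons_val', Matrix.cons_val_fin_one, Matrix.cons_val_zero, Matrix.cons_val_one,
        Matrix.cons_val]
      linear_combination
        ((2 * u 0 ^ 2 - u 1 ^ 2) * v 2 ^ 2 - u 0 * v 0 * (u 0 * v 0 - u 1 * v 1)) * hsq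
  · have hsplit : splitFiberForm u = 0 ↔ u 0 ^ 4 - 3 * u 0 ^ 2 * u 1 ^ 2 + u 1 ^ 4 = 0 := by
      simp [splitFiberForm, sub_eq_zero, hsq]
    rw [if_congr hsplit rfl rfl]
    refine card_quadric_cone_of_mulVec !![0, 0, 1; u 0, -u 1, 0; u 1, -u 0, 0] ?_ _ (u 0 * u 1)
      ?_ fun v => ?_
    · rw [show Matrix.det _ = u 1 ^ 2 - u 0 ^ 2 by simp [Matrix.det_fin_three]; ring]
      exact sub_ne_zero.mpr (Ne.symm hsq)
    · by_contra! h
      rcases mul_eq_zero.mp h.2 with h0 | h0 <;> simp_all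
    · simp only [surfaceForm_eq, Matrix.mulVec, dotProduct, Fin.sum_univ_three, Matrix.of_apply,
        Matrix.cons_val', Matrix.cons_val_fin_one, Matrix.cons_val_zero, Matrix.cons_val_one,
        Matrix.cons_val]
      ring

theorem card_surfaceForm_rep_eq_zero (h2 : (2 : F) ≠ 0) {u : Fin 2 → F} (hu : u ≠ 0) :
    Nat.card {P : ℙ F (Fin 3 → F) // surfaceForm P.rep u = 0} =
      if splitFiberForm u = 0 then 2 * Nat.card F + 1 else Nat.card F + 1 := by
  have hcone := Projectivization.card_subtype_of_smul_iff (K := F)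
    (R := fun v => surfaceForm v u = 0) (by simp [surfaceForm])
    fun c v => by simp [Units.smul_def, surfaceForm_smul]
  rw [card_surfaceForm_eq_zero h2 hu] at hcone
  have hq : 1 < Nat.card F := Finite.one_lt_card
  have hq2 : Nat.card F ≤ 2 * Nat.card F ^ 2 := by nlinarith
  apply Nat.eq_of_mul_eq_mul_right (show 0 < Nat.card F - 1 by omega)
  split_ifs at hcone ⊢ <;> zify [hq.le, hq2] at hcone ⊢ <;> linear_combination -hcone

theorem card_splitFiberForm_eq_zero {φ : F} (hφ : φ ^ 2 = φ + 1) (h2 : (2 : F) ≠ 0)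
    (h5 : (5 : F) ≠ 0) :
    Nat.card {u : Fin 2 → F // splitFiberForm u = 0} = 6 * (Nat.card F - 1) + 1 := by
  rw [← Nat.card_congr ((finTwoArrowEquiv F).symm.subtypeEquiv
      (p := fun x => splitFiberForm ![x.1, x.2] = 0) fun _ => Iff.rfl),
    card_subtype_prod_eq_sum_snd fun z w => splitFiberForm ![z, w] = 0,
    sum_eq_add_card_sub_one_mul 0 _ (m := 6) fun w hw => ?_]
  · have hw0 (z : F) : splitFiberForm ![z, 0] = 0 ↔ z = 0 := by simp [splitFiberForm]
    rw [Nat.card_congr (Equiv.subtypeEquivRight hw0), Nat.card_unique]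
    ring
  · have hscale (r : F) : splitFiberForm ![r * w, w] = w ^ 6 * splitFiberForm ![r, 1] := by
      rw [← splitFiberForm_smul]
      congr 1
      ext i
      fin_cases i <;> simp [mul_comm]
    rw [← Nat.card_congr ((Equiv.mulRight₀ w hw).subtypeEquiv
      (p := fun r => splitFiberForm ![r, 1] = 0) fun r => by simp [hscale, hw])]
    exact card_splitFiberForm_one_eq_zero hφ h2 h5

theorem card_splitFiberForm_rep_eq_zero {φ : F} (hφ : φ ^ 2 = φ + 1) (h2 : (2 : F) ≠ 0)
    (h5 : (5 : F) ≠ 0) : Nat.card {Q : ℙ F (Fin 2 → F) // splitFiberForm Q.rep = 0} = 6 := by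
  have hcone := Projectivization.card_subtype_of_smul_iff (K := F)
    (R := fun u : Fin 2 → F => splitFiberForm u = 0) (by simp [splitFiberForm])
    fun c v => by simp [Units.smul_def, splitFiberForm_smul]
  rw [card_splitFiberForm_eq_zero hφ h2 h5] at hcone
  have hq : 1 < Nat.card F := Finite.one_lt_card
  exact (Nat.eq_of_mul_eq_mul_right (show 0 < Nat.card F - 1 by omega) (by linarith)).symm

theorem card_surface {φ : F} (hφ : φ ^ 2 = φ + 1) (h2 : (2 : F) ≠ 0) (h5 : (5 : F) ≠ 0) :
    Nat.card {PQ : ℙ F (Fin 3 → F) × ℙ F (Fin 2 → F) //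
      surfaceForm PQ.1.rep PQ.2.rep = 0} = Nat.card F ^ 2 + 8 * Nat.card F + 1 := by
  have := Fintype.ofFinite (ℙ F (Fin 2 → F))
  have := Fintype.ofFinite (ℙ F (Fin 3 → F))
  rw [card_subtype_prod_eq_sum_snd fun (P : ℙ F (Fin 3 → F)) (Q : ℙ F (Fin 2 → F)) =>
    surfaceForm P.rep Q.rep = 0]
  simp_rw [card_surfaceForm_rep_eq_zero h2 (Projectivization.rep_nonzero _)]
  have hsplit (Q : ℙ F (Fin 2 → F)) :
      (if splitFiberForm Q.rep = 0 then 2 * Nat.card F + 1 else Nat.card F + 1) =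
        Nat.card F + 1 + if splitFiberForm Q.rep = 0 then Nat.card F else 0 := by
    split_ifs <;> ring
  rw [Finset.sum_congr rfl fun Q _ => hsplit Q, Finset.sum_add_distrib, ← Finset.sum_filter,
    Finset.sum_const, Finset.sum_const, Finset.card_univ, ← Fintype.card_subtype,
    ← Nat.card_eq_fintype_card, ← Nat.card_eq_fintype_card,
    card_splitFiberForm_rep_eq_zero hφ h2 h5,
    Projectivization.card_of_finrank_two F _ (Module.finrank_fin_fun F), smul_eq_mul, smul_eq_mul]
  ring

end SurfaceCount

theorem exists_sq_eq_of_legendreSym_eq_one {p : ℕ} [Fact p.Prime] {K : Type*} [Field K]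
    [CharP K p] {a : ℤ} (h : legendreSym p a = 1) : ∃ s : K, s ^ 2 = a ∧ (a : K) ≠ 0 := by
  have ha : (a : ZMod p) ≠ 0 := fun h0 => by simp [(legendreSym.eq_zero_iff p a).mpr h0] at h
  obtain ⟨t, ht⟩ := (legendreSym.eq_one_iff p ha).mp h
  let f := ZMod.castHom (dvd_refl p) K
  refine ⟨f t, by rw [sq, ← map_mul, ← ht, map_intCast], ?_⟩
  rw [← map_intCast f]
  exact (map_ne_zero f).mpr ha

theorem stmt_19_general (p n : ℕ) [Fact p.Prime] (hodd : p ≠ 2)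
    (hleg : legendreSym p 5 = 1)
    (F : Type) [Field F] [Fintype F] (hF : Fintype.card F = p ^ n) :
    Nat.card {PQ : Projectivization F (Fin 3 → F) × Projectivization F (Fin 2 → F) //
      PQ.1.rep 2 ^ 2 * PQ.2.rep 0 ^ 4
        - PQ.1.rep 0 * PQ.1.rep 1 * PQ.2.rep 0 ^ 3 * PQ.2.rep 1
        + (PQ.1.rep 0 ^ 2 + PQ.1.rep 1 ^ 2 - 3 * PQ.1.rep 2 ^ 2) * PQ.2.rep 0 ^ 2 * PQ.2.rep 1 ^ 2
        - PQ.1.rep 0 * PQ.1.rep 1 * PQ.2.rep 0 * PQ.2.rep 1 ^ 3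
        + PQ.1.rep 2 ^ 2 * PQ.2.rep 1 ^ 4 = 0} =
      (p ^ n) ^ 2 + 8 * p ^ n + 1 := by
  classical
  have := charP_of_card_eq_prime_pow hF
  have h2 : (2 : F) ≠ 0 := Ring.two_ne_zero (by rwa [ringChar.eq F p])
  obtain ⟨s, hs, h5⟩ := exists_sq_eq_of_legendreSym_eq_one (K := F) hleg
  push_cast at hs h5
  rw [← hF, ← Nat.card_eq_fintype_card]
  exact card_surface (φ := (1 + s) / 2) (by field_simp; linear_combination hs) h2 h5

theorem stmt_19 (p n : ℕ) [Fact p.Prime] (hodd : p ≠ 2) (hn : 0 < n)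
    (hleg : legendreSym p 5 = 1)
    (F : Type) [Field F] [Fintype F] (hF : Fintype.card F = p ^ n) :
    Nat.card {PQ : Projectivization F (Fin 3 → F) × Projectivization F (Fin 2 → F) //
      PQ.1.rep 2 ^ 2 * PQ.2.rep 0 ^ 4
        - PQ.1.rep 0 * PQ.1.rep 1 * PQ.2.rep 0 ^ 3 * PQ.2.rep 1
        + (PQ.1.rep 0 ^ 2 + PQ.1.rep 1 ^ 2 - 3 * PQ.1.rep 2 ^ 2) * PQ.2.rep 0 ^ 2 * PQ.2.rep 1 ^ 2
        - PQ.1.rep 0 * PQ.1.rep 1 * PQ.2.rep 0 * PQ.2.rep 1 ^ 3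
        + PQ.1.rep 2 ^ 2 * PQ.2.rep 1 ^ 4 = 0} =
      (p ^ n) ^ 2 + 8 * p ^ n + 1 :=
  stmt_19_general p n hodd hleg F hF
end
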